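/- arXiv:1009.6109 — 7 statements merged into one kernel-verified Lean document; each statement's English description precedes it below -/
import Mathlib

section
/- Let q = p^h > 2 be a prime power, K a finite field with q² elements, and 𝒰 a unital in PG(2,q²). Let h ∈ PGL(3,K) be a projectivity preserving 𝒰 that fixes pointwise the tangent line ℓ of 𝒰 at a point O ∈ 𝒰 and also fixes a point Y ∈ 𝒰 with Y ∉ ℓ. If the order of h is not divisible by p, then h is the identity. -/
open Projectivization
open scoped LinearAlgebra.Projectivization

variable (K : Type*) [Field K]

/-- The point set of `PG(2,K)`. -/
abbrev PGPt := ℙ K (Fin 3 → K)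

/-- A line of `PG(2,K)`: a 2-dimensional subspace of `K³`. -/
def PGLn := {W : Submodule K (Fin 3 → K) // Module.finrank K W = 2}

variable {K}

/-- Incidence between points and lines of `PG(2,K)`. -/
def PGMem (P : PGPt K) (L : PGLn K) : Prop := P.submodule ≤ L.1

/-- A unital in `PG(2,q²)`: a set of `q³+1` points meeting every line in `1` or `q+1` points. -/
def IsUnital (q : ℕ) (U : Set (PGPt K)) : Prop :=
  U.ncard = q ^ 3 + 1 ∧
    ∀ L : PGLn K, {P ∈ U | PGMem P L}.ncard = 1 ∨ {P ∈ U | PGMem P L}.ncard = q + 1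

lemma projmap_mul (f g : (Fin 3 → K) ≃ₗ[K] (Fin 3 → K)) (P : PGPt K) :
    Projectivization.map f.toLinearMap f.injective
      (Projectivization.map g.toLinearMap g.injective P) =
    Projectivization.map (f * g).toLinearMap (f * g).injective P := by
  induction' P using Projectivization.ind with v hv
  rfl

lemma projmap_one (P : PGPt K) :
    Projectivization.map (1 : (Fin 3 → K) ≃ₗ[K] (Fin 3 → K)).toLinearMap
      (1 : (Fin 3 → K) ≃ₗ[K] (Fin 3 → K)).injective P = P := by
  induction' P using Projectivization.ind with v hv
  rfl

/-- The permutation of the projective plane induced by a linear automorphism of `K³`. -/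
def projPerm (e : (Fin 3 → K) ≃ₗ[K] (Fin 3 → K)) : Equiv.Perm (PGPt K) where
  toFun := Projectivization.map e.toLinearMap e.injective
  invFun := Projectivization.map e.symm.toLinearMap e.symm.injective
  left_inv := fun P => by
    rw [projmap_mul, show e.symm * e = 1 from LinearEquiv.ext fun v => e.symm_apply_apply v, projmap_one]
  right_inv := fun P => by
    rw [projmap_mul, show e * e.symm = 1 from LinearEquiv.ext fun v => e.apply_symm_apply v, projmap_one]

/-- The homomorphism from linear automorphisms of `K³` to permutations of `PG(2,K)`;
its range is the group `PGL(3,K)` of projectivities, acting faithfully on the plane. -/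
def projHom : ((Fin 3 → K) ≃ₗ[K] (Fin 3 → K)) →* Equiv.Perm (PGPt K) where
  toFun := projPerm
  map_one' := by ext P; exact projmap_one P
  map_mul' := fun f g => by ext P; exact (projmap_mul f g P).symm

/-- `PGL(3,K)` as a group of permutations of the plane. -/
def PGL3 (K : Type*) [Field K] : Subgroup (Equiv.Perm (PGPt K)) := (projHom (K := K)).range

/-- The subgroup of `PGL(3,K)` preserving a point set `U`. -/
def presGroup (U : Set (PGPt K)) : Subgroup (Equiv.Perm (PGPt K)) where
  carrier := {σ | σ ∈ PGL3 K ∧ σ '' U = U}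
  one_mem' := ⟨one_mem _, by simp⟩
  mul_mem' := fun {a b} ha hb => ⟨mul_mem ha.1 hb.1, by
    rw [show ⇑(a * b) = ⇑a ∘ ⇑b from rfl, Set.image_comp, hb.2, ha.2]⟩
  inv_mem' := fun {a} ha => ⟨inv_mem ha.1, by
    conv_lhs => rw [← ha.2]
    rw [show (a⁻¹ : Equiv.Perm (PGPt K)) = a.symm from rfl]
    exact Equiv.symm_image_image a U⟩

/-- The stabiliser of two points inside the group preserving `U`. -/
def twoPtStab (U : Set (PGPt K)) (P Q : PGPt K) : Subgroup (Equiv.Perm (PGPt K)) where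
  carrier := {σ | σ ∈ presGroup U ∧ σ P = P ∧ σ Q = Q}
  one_mem' := ⟨one_mem _, rfl, rfl⟩
  mul_mem' := fun {a b} ha hb => ⟨mul_mem ha.1 hb.1, by
    simp [Equiv.Perm.mul_apply, hb.2.1, ha.2.1], by simp [Equiv.Perm.mul_apply, hb.2.2, ha.2.2]⟩
  inv_mem' := fun {a} ha => ⟨inv_mem ha.1,
    by rw [Equiv.Perm.inv_def, Equiv.symm_apply_eq]; exact ha.2.1.symm,
    by rw [Equiv.Perm.inv_def, Equiv.symm_apply_eq]; exact ha.2.2.symm⟩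

/-- The classical (Hermitian) unital: image of the Hermitian curve
`x^{q+1} + y^{q+1} + z^{q+1} = 0` under an element of `PGL(3,K)`. -/
def IsClassicalUnital (q : ℕ) (U : Set (PGPt K)) : Prop :=
  ∃ σ ∈ PGL3 K, σ '' {P : PGPt K |
    P.rep 0 ^ (q + 1) + P.rep 1 ^ (q + 1) + P.rep 2 ^ (q + 1) = 0} = U

/-!
Lift `h` to a linear map `e` of `K³` that fixes a representative `y` of `Y` and is a scalar `μ`
on the axis `ℓ`. A point `P ∈ 𝒰` off the line `OY` gives a secant `YP` through `Y` meeting `ℓ`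
in a point `[w] ≠ O`, which is off `𝒰` because `ℓ` is the tangent at `O`. In the affine chart
`t ↦ [y + t • w]` of `YP` the map `h` is `t ↦ μ t`, so the nonzero parameters of the `q` points
of `𝒰 ∩ YP` other than `Y` form a set stable under multiplication by `μ`; comparing the products
of its elements gives `μ ^ q = 1`. Hence `h ^ q = 1`, and since `q = p ^ n` and `p ∤ ord h`,
`h = 1`.
-/

section LinearAlgebra

variable {V : Type*} [AddCommGroup V] [Module K V]

theorem LinearMap.exists_forall_mem_apply_eq_smul {f : V →ₗ[K] V} {W : Submodule K V}
    (h : ∀ v ∈ W, ∃ c : K, f v = c • v) : ∃ a : K, ∀ v ∈ W, f v = a • v := by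
  have hW : ∀ v ∈ W, f v ∈ W := fun v hv => by
    obtain ⟨c, hc⟩ := h v hv
    exact hc ▸ W.smul_mem c hv
  obtain ⟨a, ha⟩ := (f.restrict hW).exists_eq_smul_id_of_forall_notLinearIndependent fun v => by
    obtain ⟨c, hc⟩ := h v v.2
    intro hli
    simpa using (LinearIndependent.pair_iff.1 hli c (-1) (by ext; simp [hc])).2
  exact ⟨a, fun v hv => congrArg Subtype.val (LinearMap.congr_fun ha ⟨v, hv⟩)⟩

theorem Submodule.sup_span_singleton_eq_top [FiniteDimensional K V] {W : Submodule K V} {v : V}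
    (hW : Module.finrank K W + 1 = Module.finrank K V) (hv : v ∉ W) : W ⊔ K ∙ v = ⊤ :=
  Submodule.eq_top_of_finrank_eq ((Submodule.finrank_sup_span_singleton hv).trans hW)

theorem linearIndependent_pair_of_mem_of_notMem {W : Submodule K V} {w y : V} (hw : w ∈ W)
    (hw0 : w ≠ 0) (hy : y ∉ W) : LinearIndependent K ![w, y] :=
  (LinearIndependent.pair_iff' hw0).2 fun a hay => hy (hay ▸ W.smul_mem a hw)

theorem LinearIndependent.add_smul_ne_zero {w y : V} (hwy : LinearIndependent K ![w, y]) (t : K) :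
    y + t • w ≠ 0 := fun h =>
  one_ne_zero (LinearIndependent.pair_iff.1 hwy t 1 (by rw [one_smul, add_comm]; exact h)).2

theorem finrank_span_pair {u v : V} (h : LinearIndependent K ![u, v]) :
    Module.finrank K (Submodule.span K {u, v}) = 2 := by
  rw [← Matrix.range_cons_cons_empty u v ![], finrank_span_eq_card h, Fintype.card_fin]

theorem LinearEquiv.pow_apply_of_apply_eq_smul {e : V ≃ₗ[K] V} {v : V} {c : K}
    (h : e v = c • v) (k : ℕ) : (e ^ k) v = c ^ k • v := by
  induction k with
  | zero => simp
  | succ k ih => rw [pow_succ', LinearEquiv.mul_apply, ih, map_smul, h, smul_smul, pow_succ]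

theorem LinearEquiv.pow_eq_one_of_homology {e : V ≃ₗ[K] V} {W : Submodule K V} {y : V} {μ : K}
    {k : ℕ} (hWy : W ⊔ K ∙ y = ⊤) (hy : e y = y) (hW : ∀ v ∈ W, e v = μ • v) (hμ : μ ^ k = 1) :
    e ^ k = 1 := by
  have hy' : (e ^ k) y = y := by
    simpa using pow_apply_of_apply_eq_smul (e := e) (c := (1 : K)) (by rw [one_smul, hy]) k
  refine LinearMap.ext_on_codisjoint (codisjoint_iff.2 hWy) (fun v hv => ?_) (fun v hv => ?_)
  · simp [pow_apply_of_apply_eq_smul (hW v hv), hμ]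
  · obtain ⟨c, rfl⟩ := Submodule.mem_span_singleton.1 hv
    simp [hy']

end LinearAlgebra

theorem pow_card_eq_one_of_forall_mul_mem {R : Type*} [CommRing R] [IsDomain R] {F : Finset R}
    {μ : R} (h0 : (0 : R) ∉ F) (hF : ∀ x ∈ F, μ * x ∈ F) : μ ^ F.card = 1 := by
  classical
  rcases F.eq_empty_or_nonempty with rfl | ⟨x, hx⟩
  · simp
  have hμ : μ ≠ 0 := by
    rintro rfl
    exact h0 (by simpa using hF x hx)
  have hinj : Set.InjOn (μ * ·) F := fun a _ b _ hab => mul_left_cancel₀ hμ hab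
  have himage : F.image (μ * ·) = F :=
    Finset.eq_of_subset_of_card_le (Finset.image_subset_iff.2 hF)
      (Finset.card_image_of_injOn hinj).ge
  have hprod : ∏ x ∈ F, x ≠ 0 := Finset.prod_ne_zero_iff.2 fun a ha h => h0 (h ▸ ha)
  refine (mul_eq_right₀ hprod).1 ?_
  calc μ ^ F.card * ∏ x ∈ F, x = ∏ x ∈ F, μ * x := by
        rw [Finset.prod_mul_distrib, Finset.prod_const]
    _ = ∏ x ∈ F.image (μ * ·), x := (Finset.prod_image (f := fun x => x) hinj).symm
    _ = ∏ x ∈ F, x := by rw [himage]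

namespace Projectivization

variable {V : Type*} [AddCommGroup V] [Module K V] {w y : V}

/-- The affine chart of the line `[w][y]` with `[w]` at infinity. -/
def lineChart (hwy : LinearIndependent K ![w, y]) (t : K) : ℙ K V :=
  mk K (y + t • w) (hwy.add_smul_ne_zero t)

theorem lineChart_zero (hwy : LinearIndependent K ![w, y]) (hy : y ≠ 0) :
    lineChart hwy 0 = mk K y hy := by
  simp only [lineChart, zero_smul, add_zero]

theorem lineChart_injective (hwy : LinearIndependent K ![w, y]) :
    Function.Injective (lineChart hwy) := by
  intro s t hst
  obtain ⟨c, hc⟩ := (mk_eq_mk_iff' K _ _ _ _).1 hst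
  have hcomb : (c * t - s) • w + (c - 1) • y = 0 :=
    calc _ = c • (y + t • w) - (y + s • w) := by module
      _ = 0 := sub_eq_zero.2 hc
  obtain ⟨hts, hc1⟩ := LinearIndependent.pair_iff.1 hwy _ _ hcomb
  rw [sub_eq_zero] at hts hc1
  rw [← hts, hc1, one_mul]

theorem submodule_lineChart_le (hwy : LinearIndependent K ![w, y]) (t : K) :
    (lineChart hwy t).submodule ≤ Submodule.span K {w, y} := by
  rw [lineChart, submodule_mk, Submodule.span_singleton_le_iff_mem, add_comm]
  exact Submodule.mem_span_pair.2 ⟨t, 1, by rw [one_smul]⟩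

theorem exists_lineChart_eq (hwy : LinearIndependent K ![w, y]) {Q : ℙ K V}
    (hQ : Q.submodule ≤ Submodule.span K {w, y}) (hQw : Q ≠ mk K w (by simpa using hwy.ne_zero 0)) :
    ∃ t, lineChart hwy t = Q := by
  rw [submodule_eq, Submodule.span_singleton_le_iff_mem] at hQ
  obtain ⟨a, b, hab⟩ := Submodule.mem_span_pair.1 hQ
  have hb : b ≠ 0 := by
    rintro rfl
    refine hQw ?_
    rw [← mk_rep Q, mk_eq_mk_iff']
    exact ⟨a, by rw [← hab, zero_smul, add_zero]⟩
  refine ⟨b⁻¹ * a, ?_⟩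
  rw [← mk_rep Q, lineChart, mk_eq_mk_iff']
  exact ⟨b⁻¹, by rw [← hab, smul_add, smul_smul, smul_smul, inv_mul_cancel₀ hb, one_smul, add_comm]⟩

theorem map_lineChart (hwy : LinearIndependent K ![w, y]) {e : V ≃ₗ[K] V} {μ : K}
    (hy : e y = y) (hw : e w = μ • w) (t : K) :
    (lineChart hwy t).map e.toLinearMap e.injective = lineChart hwy (μ * t) := by
  rw [lineChart, lineChart, map_mk, mk_eq_mk_iff']
  exact ⟨1, by simp [hy, hw, smul_smul, mul_comm]⟩

theorem pow_eq_one_of_ncard_lineChart_preimage (hwy : LinearIndependent K ![w, y])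
    {e : V ≃ₗ[K] V} {μ : K} (hey : e y = y) (hew : e w = μ • w) {U : Set (ℙ K V)}
    (hUe : ∀ P ∈ U, P.map e.toLinearMap e.injective ∈ U) (h0 : lineChart hwy 0 ∈ U) {n : ℕ}
    (hn : {t | lineChart hwy t ∈ U}.ncard = n + 1) : μ ^ n = 1 := by
  classical
  set S := {t | lineChart hwy t ∈ U}
  have hμ : μ ≠ 0 := by
    rintro rfl
    exact hwy.ne_zero 0 (e.map_eq_zero_iff.1 (by simpa using hew))
  have hSμ : ∀ t ∈ S, μ * t ∈ S := fun t ht => by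
    simpa only [S, Set.mem_ofPred_eq, map_lineChart hwy hey hew] using hUe _ ht
  have hSfin : S.Finite := Set.finite_of_ncard_ne_zero (by omega)
  have hF : ∀ t ∈ hSfin.toFinset.erase 0, μ * t ∈ hSfin.toFinset.erase 0 := by
    simp only [Finset.mem_erase, Set.Finite.mem_toFinset]
    exact fun t ⟨ht0, ht⟩ => ⟨mul_ne_zero hμ ht0, hSμ t ht⟩
  have hpow := pow_card_eq_one_of_forall_mul_mem (by simp) hF
  rwa [Finset.card_erase_of_mem (by simpa [S] using h0), ← Set.ncard_eq_toFinset_card S hSfin, hn,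
    Nat.add_sub_cancel] at hpow

end Projectivization

theorem pgMem_iff_rep_mem {P : PGPt K} {L : PGLn K} : PGMem P L ↔ P.rep ∈ L.1 := by
  rw [PGMem, submodule_eq, Submodule.span_singleton_le_iff_mem]

theorem pgMem_mk_iff {v : Fin 3 → K} (hv : v ≠ 0) {L : PGLn K} :
    PGMem (mk K v hv) L ↔ v ∈ L.1 := by
  rw [PGMem, submodule_mk, Submodule.span_singleton_le_iff_mem]

theorem sup_span_rep_eq_top_of_not_pgMem {Y : PGPt K} {L : PGLn K} (hY : ¬ PGMem Y L) :
    L.1 ⊔ K ∙ Y.rep = ⊤ :=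
  Submodule.sup_span_singleton_eq_top (by rw [L.2, Module.finrank_fin_fun])
    (pgMem_iff_rep_mem.not.1 hY)

def lineThrough {u v : Fin 3 → K} (h : LinearIndependent K ![u, v]) : PGLn K :=
  ⟨Submodule.span K {u, v}, finrank_span_pair h⟩

theorem projHom_mk_eq_self_iff (e : (Fin 3 → K) ≃ₗ[K] (Fin 3 → K)) {v : Fin 3 → K} (hv : v ≠ 0) :
    projHom e (mk K v hv) = mk K v hv ↔ ∃ c : K, e v = c • v := by
  rw [show projHom e (mk K v hv) = mk K (e v) (e.map_ne_zero_iff.2 hv) from rfl, mk_eq_mk_iff']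
  simp only [eq_comm]

theorem projHom_smulOfNeZero_mul (c : K) (hc : c ≠ 0) (e : (Fin 3 → K) ≃ₗ[K] (Fin 3 → K)) :
    projHom (LinearEquiv.smulOfNeZero K _ c hc * e) = projHom e := by
  ext1 P
  induction P using Projectivization.ind with | h v hv =>
  exact (mk_eq_mk_iff' K _ _ _ _).2 ⟨c, rfl⟩

theorem exists_homology_representative {e : (Fin 3 → K) ≃ₗ[K] (Fin 3 → K)} {ℓ : PGLn K}
    {Y : PGPt K} (haxis : ∀ R, PGMem R ℓ → projHom e R = R) (hY : projHom e Y = Y) :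
    ∃ (e' : (Fin 3 → K) ≃ₗ[K] (Fin 3 → K)) (μ : K),
      projHom e' = projHom e ∧ e' Y.rep = Y.rep ∧ ∀ v ∈ ℓ.1, e' v = μ • v := by
  obtain ⟨a, ha⟩ := e.toLinearMap.exists_forall_mem_apply_eq_smul (W := ℓ.1) fun v hv => by
    rcases eq_or_ne v 0 with rfl | hv0
    · exact ⟨0, by simp⟩
    · exact (projHom_mk_eq_self_iff e hv0).1 (haxis _ ((pgMem_mk_iff hv0).2 hv))
  obtain ⟨c, hc⟩ := (projHom_mk_eq_self_iff e Y.rep_nonzero).1 (by rw [mk_rep]; exact hY)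
  have hc0 : c ≠ 0 := by
    rintro rfl
    exact Y.rep_nonzero (e.map_eq_zero_iff.1 (by rw [hc, zero_smul]))
  refine ⟨LinearEquiv.smulOfNeZero K _ c⁻¹ (inv_ne_zero hc0) * e, c⁻¹ * a,
    projHom_smulOfNeZero_mul _ _ e, ?_, fun v hv => ?_⟩
  · change c⁻¹ • e Y.rep = Y.rep
    rw [hc, inv_smul_smul₀ hc0]
  · change c⁻¹ • e v = _
    rw [← smul_smul, ← ha v hv]
    rfl

namespace IsUnital

variable {q : ℕ} {U : Set (PGPt K)}

theorem exists_mem_not_pgMem (hU : IsUnital q U) (hq : 1 < q) (L : PGLn K) :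
    ∃ P ∈ U, ¬ PGMem P L := by
  by_contra! hall
  have hsep : {P ∈ U | PGMem P L} = U := Set.sep_eq_self_iff_mem_true.2 hall
  have hq3 : q < q ^ 3 := by simpa using Nat.pow_lt_pow_right hq (by norm_num : 1 < 3)
  rcases hU.2 L with h1 | h1 <;> rw [hsep, hU.1] at h1 <;> omega

theorem ncard_eq_of_mem_of_mem (hU : IsUnital q U) {L : PGLn K} {P Q : PGPt K} (hP : P ∈ U)
    (hQ : Q ∈ U) (hPQ : P ≠ Q) (hPL : PGMem P L) (hQL : PGMem Q L) :
    {R ∈ U | PGMem R L}.ncard = q + 1 := by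
  refine (hU.2 L).resolve_left fun h1 => hPQ ?_
  obtain ⟨R, hR⟩ := Set.ncard_eq_one.1 h1
  have hPR : P ∈ ({R} : Set _) := hR ▸ ⟨hP, hPL⟩
  have hQR : Q ∈ ({R} : Set _) := hR ▸ ⟨hQ, hQL⟩
  exact hPR.trans hQR.symm

theorem ncard_lineChart_preimage (hU : IsUnital q U) {w y : Fin 3 → K}
    (hwy : LinearIndependent K ![w, y]) (hwU : mk K w (by simpa using hwy.ne_zero 0) ∉ U)
    {P Q : PGPt K} (hP : P ∈ U) (hQ : Q ∈ U) (hPQ : P ≠ Q)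
    (hPL : P.rep ∈ Submodule.span K {w, y}) (hQL : Q.rep ∈ Submodule.span K {w, y}) :
    {t | lineChart hwy t ∈ U}.ncard = q + 1 := by
  have himage :
      lineChart hwy '' {t | lineChart hwy t ∈ U} = {R ∈ U | PGMem R (lineThrough hwy)} := by
    ext R
    constructor
    · rintro ⟨t, ht, rfl⟩
      exact ⟨ht, submodule_lineChart_le hwy t⟩
    · rintro ⟨hR, hRL⟩
      obtain ⟨t, rfl⟩ := exists_lineChart_eq hwy hRL fun h => hwU (h ▸ hR)
      exact ⟨t, hR, rfl⟩
  rw [← Set.ncard_image_of_injective _ (lineChart_injective hwy), himage]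
  exact hU.ncard_eq_of_mem_of_mem hP hQ hPQ (pgMem_iff_rep_mem.2 hPL) (pgMem_iff_rep_mem.2 hQL)

theorem exists_secant_of_tangent (hU : IsUnital q U) (hq : 1 < q) {O : PGPt K} {ℓ : PGLn K}
    (hOℓ : PGMem O ℓ) (htangent : {R ∈ U | PGMem R ℓ} = {O}) {Y : PGPt K} (hYℓ : ¬ PGMem Y ℓ) :
    ∃ w ∈ ℓ.1, ∃ hw : w ≠ 0, mk K w hw ∉ U ∧
      ∃ P ∈ U, P ≠ Y ∧ P.rep ∈ Submodule.span K {w, Y.rep} := by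
  have hOY := linearIndependent_pair_of_mem_of_notMem (pgMem_iff_rep_mem.1 hOℓ) O.rep_nonzero
    (pgMem_iff_rep_mem.not.1 hYℓ)
  obtain ⟨P, hPU, hPOY⟩ := hU.exists_mem_not_pgMem hq (lineThrough hOY)
  rw [pgMem_iff_rep_mem] at hPOY
  have hP : P.rep ∈ ℓ.1 ⊔ K ∙ Y.rep := sup_span_rep_eq_top_of_not_pgMem hYℓ ▸ Submodule.mem_top
  obtain ⟨w, hw, _, hz, hwz⟩ := Submodule.mem_sup.1 hP
  obtain ⟨s, rfl⟩ := Submodule.mem_span_singleton.1 hz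
  have hwO : ∀ c : K, w ≠ c • O.rep := by
    rintro c rfl
    exact hPOY (hwz ▸ Submodule.mem_span_pair.2 ⟨c, s, rfl⟩)
  have hw0 : w ≠ 0 := by simpa using hwO 0
  refine ⟨w, hw, hw0, fun hwU => ?_, P, hPU, ?_,
    Submodule.mem_span_pair.2 ⟨1, s, by rw [one_smul, hwz]⟩⟩
  · have hwO' : mk K w hw0 ∈ {R ∈ U | PGMem R ℓ} := ⟨hwU, (pgMem_mk_iff hw0).2 hw⟩
    rw [htangent, Set.mem_singleton_iff, ← mk_rep O, mk_eq_mk_iff'] at hwO'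
    obtain ⟨c, hc⟩ := hwO'
    exact hwO c hc.symm
  · rintro rfl
    exact hPOY (Submodule.subset_span (by simp))

end IsUnital

theorem perspectivity_preserving_unital_is_identity_general
    (p n q : ℕ) (hp : p.Prime) (hqpn : q = p ^ n) (hq2 : 2 < q)
    {K : Type*} [Field K]
    (U : Set (PGPt K)) (hU : IsUnital q U)
    (O : PGPt K)
    (ℓ : PGLn K) (hOℓ : PGMem O ℓ) (htangent : {R ∈ U | PGMem R ℓ} = {O})
    (Y : PGPt K) (hY : Y ∈ U) (hYℓ : ¬ PGMem Y ℓ)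
    (h : Equiv.Perm (PGPt K)) (hM : h ∈ presGroup U)
    (haxis : ∀ R : PGPt K, PGMem R ℓ → h R = R)
    (hcentre : h Y = Y)
    (horder : ¬ p ∣ orderOf h) :
    h = 1 := by
  obtain ⟨⟨e₀, rfl⟩, hUe₀⟩ := hM
  obtain ⟨e, μ, he, hey, heℓ⟩ := exists_homology_representative haxis hcentre
  rw [← he] at hUe₀ horder ⊢
  obtain ⟨w, hwℓ, hw0, hwU, P, hPU, hPY, hPL⟩ :=
    hU.exists_secant_of_tangent (by omega) hOℓ htangent hYℓ
  have hwy := linearIndependent_pair_of_mem_of_notMem hwℓ hw0 (pgMem_iff_rep_mem.not.1 hYℓ)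
  have hμ : μ ^ q = 1 :=
    pow_eq_one_of_ncard_lineChart_preimage hwy hey (heℓ w hwℓ)
      (fun R hR => hUe₀ ▸ Set.mem_image_of_mem _ hR)
      (by rw [lineChart_zero hwy Y.rep_nonzero, mk_rep]; exact hY)
      (hU.ncard_lineChart_preimage hwy hwU hPU hY hPY hPL (Submodule.subset_span (by simp)))
  have hpow : projHom e ^ q = 1 := by
    rw [← map_pow,
      LinearEquiv.pow_eq_one_of_homology (sup_span_rep_eq_top_of_not_pgMem hYℓ) hey heℓ hμ, map_one]
  have hcop : (orderOf (projHom e)).Coprime q :=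
    hqpn ▸ (Nat.coprime_comm.1 (hp.coprime_iff_not_dvd.2 horder)).pow_right n
  exact orderOf_eq_one_iff.1 (hcop.eq_one_of_dvd (orderOf_dvd_of_pow_eq_one hpow))

/-- Let `U` be a unital in `PG(2,q²)`, `q = p^h > 2`.  A projectivity preserving `U` which fixes
pointwise the tangent line `ℓ` of `U` at a point `O ∈ U`, fixes a point `Y ∈ U` off `ℓ`, and has
order not divisible by `p`, is the identity. -/
theorem perspectivity_preserving_unital_is_identity
    (p n q : ℕ) (hp : p.Prime) (hn : 0 < n) (hqpn : q = p ^ n) (hq2 : 2 < q)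
    {K : Type*} [Field K] [Fintype K] (hK : Fintype.card K = q ^ 2)
    (U : Set (PGPt K)) (hU : IsUnital q U)
    (O : PGPt K) (hO : O ∈ U)
    (ℓ : PGLn K) (hOℓ : PGMem O ℓ) (htangent : {R ∈ U | PGMem R ℓ} = {O})
    (Y : PGPt K) (hY : Y ∈ U) (hYℓ : ¬ PGMem Y ℓ)
    (h : Equiv.Perm (PGPt K)) (hM : h ∈ presGroup U)
    (haxis : ∀ R : PGPt K, PGMem R ℓ → h R = R)
    (hcentre : h Y = Y)
    (horder : ¬ p ∣ orderOf h) :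
    h = 1 :=
  perspectivity_preserving_unital_is_identity_general p n q hp hqpn hq2 U hU O ℓ hOℓ htangent Y hY
    hYℓ h hM haxis hcentre horder
end

section
/- Let q = p^h be a prime power and K a finite field with q² elements. Let y ∈ K[[t]] be the formal power series with constant term 0 satisfying y^q + y = t^{q+1}. Then for every c ∈ K with c ≠ 0, the series c^q·y^q + c·y has order exactly q + 1. (This computes the intersection multiplicity, at a common point where a linear component of the cone is tangent to the curve, of the Hermitian curve −X₁^{q+1} + X₂^q X₃ + X₂ X₃^q = 0 and the Hermitian cone c^q X₂^q X₃ + c X₂ X₃^q = 0, showing it equals q+1.) -/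
/-!
Over any coefficient ring, if `z` has zero constant term and `q ≥ 2`, then `z ^ q` has order at
least `q · ord z > ord z`, so `ord (z ^ q + z) = ord z`. Applied to `z = y` this gives
`ord y = q + 1`; applied to `z = c · y`, whose `q`-th power is `c ^ q · y ^ q`, it gives the claim.
-/

namespace PowerSeries

variable {R : Type*} [Semiring R]

theorem order_lt_order_pow_of_constantCoeff_eq_zero {φ : R⟦X⟧} (hφ : constantCoeff φ = 0)
    (hφ0 : φ ≠ 0) {q : ℕ} (hq : 2 ≤ q) : φ.order < (φ ^ q).order := by
  refine lt_of_lt_of_le ?_ (le_order_pow φ q)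
  obtain ⟨d, hd⟩ := ENat.ne_top_iff_exists.mp (order_eq_top.not.mpr hφ0)
  have hd1 : 1 ≤ d := by
    exact_mod_cast hd ▸ one_le_order_iff_constCoeff_eq_zero.mpr hφ
  rw [← hd, nsmul_eq_mul]
  exact_mod_cast (by nlinarith : d < q * d)

theorem order_pow_add_self_of_constantCoeff_eq_zero {φ : R⟦X⟧} (hφ : constantCoeff φ = 0)
    {q : ℕ} (hq : 2 ≤ q) : (φ ^ q + φ).order = φ.order := by
  rcases eq_or_ne φ 0 with rfl | hφ0
  · rw [zero_pow (by omega), add_zero]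
  have hlt := order_lt_order_pow_of_constantCoeff_eq_zero hφ hφ0 hq
  rw [order_add_of_order_ne _ _ hlt.ne', min_eq_right hlt.le]

theorem order_C_mul_of_ne_zero [NoZeroDivisors R] {c : R} (hc : c ≠ 0) (φ : R⟦X⟧) :
    (C c * φ).order = φ.order := by
  have hC : (C c).order = 0 := by
    by_contra h
    exact hc (by simpa using order_ne_zero_iff_constCoeff_eq_zero.mp h)
  rw [order_mul, hC, zero_add]

end PowerSeries

open PowerSeries

theorem hermitian_curve_cone_intersection_multiplicity_general
    (p h q : ℕ) (hp : p.Prime) (hh : 0 < h) (hq : q = p ^ h)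
    (K : Type*) [Field K]
    (y : PowerSeries K) (hy0 : PowerSeries.constantCoeff y = 0)
    (hy : y ^ q + y = PowerSeries.X ^ (q + 1))
    (c : K) (hc : c ≠ 0) :
    (PowerSeries.C (c ^ q) * y ^ q + PowerSeries.C c * y).order = (q + 1 : ℕ) := by
  have hq2 : 2 ≤ q := hq ▸ Nat.one_lt_pow hh.ne' hp.one_lt
  have hcy0 : constantCoeff (C c * y) = 0 := by simp [hy0]
  rw [map_pow, ← mul_pow, order_pow_add_self_of_constantCoeff_eq_zero hcy0 hq2,
    order_C_mul_of_ne_zero hc, ← order_pow_add_self_of_constantCoeff_eq_zero hy0 hq2, hy,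
    order_X_pow]

/-- Intersection multiplicity of a Hermitian curve and a Hermitian cone at a common point where
a linear component of the cone is tangent to the curve: if `y ∈ K⟦t⟧` is the branch series with
`y^q + y = t^{q+1}` and constant term `0`, then for `c ≠ 0` the series `c^q·y^q + c·y` has order
exactly `q + 1`. -/
theorem hermitian_curve_cone_intersection_multiplicity
    (p h q : ℕ) (hp : p.Prime) (hh : 0 < h) (hq : q = p ^ h)
    (K : Type*) [Field K] [Fintype K] (hK : Fintype.card K = q ^ 2)
    (y : PowerSeries K) (hy0 : PowerSeries.constantCoeff y = 0)
    (hy : y ^ q + y = PowerSeries.X ^ (q + 1))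
    (c : K) (hc : c ≠ 0) :
    (PowerSeries.C (c ^ q) * y ^ q + PowerSeries.C c * y).order = (q + 1 : ℕ) :=
  hermitian_curve_cone_intersection_multiplicity_general p h q hp hh hq K y hy0 hy c hc
end

section
/- Let q be a prime power, K a finite field with q² elements, and b ∈ K with b ≠ 0. Then the number of pairs (x,y) ∈ K × K with x^{q+1} = b·y^q + b^q·y is exactly q³. -/
/-!
Write `T y = b y^q + b^q y`. Frobenius `x ↦ x^q` is an involution of `K`, so `T` is additive
with values in its fixed field `F_q`, and `T` has at most `q` zeros, being a polynomial of
degree `q`. As `|F_q| ≤ q` and `|K| = q²`, every fibre of `T` over `F_q` has exactly `q`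
elements. Since every norm `x^{q+1}` lies in `F_q`, each `x ∈ K` has exactly `q` partners `y`,
giving `q³` points.
-/

open Finset Polynomial

theorem card_filter_mul_pow_add_mul_eq_zero_le {R : Type*} [CommRing R] [IsDomain R] [Fintype R]
    [DecidableEq R] {a : R} (ha : a ≠ 0) (c : R) {n : ℕ} (hn : 1 < n) :
    #{x | a * x ^ n + c * x = 0} ≤ n := by
  set P : R[X] := C a * X ^ n + C c * X
  have hlt : (C c * X).natDegree < (C a * X ^ n).natDegree := by
    rw [natDegree_C_mul_X_pow n a ha]
    exact (natDegree_C_mul_le c X).trans_lt (by rwa [natDegree_X])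
  have hdeg : P.natDegree = n := by
    rw [natDegree_add_eq_left_of_natDegree_lt hlt, natDegree_C_mul_X_pow n a ha]
  have hP : P ≠ 0 := ne_zero_of_natDegree_gt (n := 0) (by omega)
  refine (card_le_degree_of_subset_roots fun x hx => ?_).trans hdeg.le
  rw [mem_roots hP]
  simpa [P] using (mem_filter.1 hx).2

theorem AddMonoidHom.card_fiber_eq_of_card_eq_mul {G M : Type*} [AddGroup G] [Fintype G]
    [AddMonoid M] [DecidableEq M] (f : G →+ M) {S : Finset M} {m n : ℕ} (hfS : ∀ g, f g ∈ S)
    (hS : #S ≤ m) (hker : #{g | f g = 0} ≤ n) (hG : Fintype.card G = m * n) {c : M}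
    (hc : c ∈ S) : #{g | f g = c} = n := by
  have hfiber : ∀ c, #{g | f g = c} ≤ n := by
    intro c
    by_cases hcf : c ∈ Set.range f
    · rwa [card_fiber_eq_of_mem_range f hcf ⟨0, map_zero f⟩]
    · rw [filter_false_of_mem fun g _ hg => hcf ⟨g, hg⟩, card_empty]
      exact n.zero_le
  have hsum : ∑ c ∈ S, #{g | f g = c} = ∑ _c ∈ S, n := by
    refine le_antisymm (sum_le_sum fun c _ => hfiber c) ?_
    rw [← card_eq_sum_card_fiberwise fun g _ => hfS g, card_univ, hG, sum_const, smul_eq_mul]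
    exact Nat.mul_le_mul_right n hS
  exact (sum_eq_sum_iff_of_le fun c _ => hfiber c).1 hsum c hc

section FiniteField

variable {K : Type*} [Field K] [Fintype K] {q : ℕ}

theorem pow_pow_eq_self_of_card_eq_sq (hK : Fintype.card K = q ^ 2) (x : K) : (x ^ q) ^ q = x := by
  rw [← pow_mul, ← sq, ← hK, FiniteField.pow_card]

theorem pow_succ_pow_eq_self_of_card_eq_sq (hK : Fintype.card K = q ^ 2) (x : K) :
    (x ^ (q + 1)) ^ q = x ^ (q + 1) := by
  rw [pow_succ, mul_pow, pow_pow_eq_self_of_card_eq_sq hK, mul_comm]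

variable {p k : ℕ} [ExpChar K p]

theorem mul_pow_add_pow_mul_pow_eq_self (hK : Fintype.card K = (p ^ k) ^ 2) (b y : K) :
    (b * y ^ p ^ k + b ^ p ^ k * y) ^ p ^ k = b * y ^ p ^ k + b ^ p ^ k * y := by
  rw [add_pow_expChar_pow, mul_pow, mul_pow, pow_pow_eq_self_of_card_eq_sq hK,
    pow_pow_eq_self_of_card_eq_sq hK, add_comm]

theorem card_filter_mul_pow_add_pow_mul_eq [DecidableEq K] (hK : Fintype.card K = (p ^ k) ^ 2)
    {b : K} (hb : b ≠ 0) {c : K} (hc : c ^ p ^ k = c) :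
    #{y | b * y ^ p ^ k + b ^ p ^ k * y = c} = p ^ k := by
  have hq : 1 < p ^ k := (Nat.one_lt_pow_iff two_ne_zero).1 (hK ▸ Fintype.one_lt_card)
  let T : K →+ K := AddMonoidHom.mk' (fun y => b * y ^ p ^ k + b ^ p ^ k * y) fun y z => by
    simp only [add_pow_expChar_pow]; ring
  refine T.card_fiber_eq_of_card_eq_mul (S := {c | c ^ p ^ k = c}) (m := p ^ k)
    (fun y => mem_filter.2 ⟨mem_univ _, mul_pow_add_pow_mul_pow_eq_self hK b y⟩) ?_
    (card_filter_mul_pow_add_mul_eq_zero_le hb _ hq) (by rw [hK, sq])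
    (mem_filter.2 ⟨mem_univ _, hc⟩)
  calc #{c : K | c ^ p ^ k = c} = #{c : K | 1 * c ^ p ^ k + (-1) * c = 0} := by
        simp only [one_mul, neg_one_mul, ← sub_eq_add_neg, sub_eq_zero]
    _ ≤ p ^ k := card_filter_mul_pow_add_mul_eq_zero_le one_ne_zero _ hq

end FiniteField

/-- The affine Hermitian curve `x^{q+1} = b·y^q + b^q·y` (with `b ≠ 0`) has exactly `q³` points
in `K × K`, where `K` is the field with `q²` elements. -/
theorem hermitian_curve_affine_card
    (q : ℕ) (hq : IsPrimePow q)
    (K : Type*) [Field K] [Fintype K] (hK : Fintype.card K = q ^ 2)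
    (b : K) (hb : b ≠ 0) :
    {s : K × K | s.1 ^ (q + 1) = b * s.2 ^ q + b ^ q * s.2}.ncard = q ^ 3 := by
  classical
  obtain ⟨p, k, hp, -, rfl⟩ := (isPrimePow_nat_iff q).1 hq
  have : Fact p.Prime := ⟨hp⟩
  have : CharP K p := charP_of_card_eq_prime_pow (hK.trans (pow_mul p k 2).symm)
  calc {s : K × K | s.1 ^ (p ^ k + 1) = b * s.2 ^ p ^ k + b ^ p ^ k * s.2}.ncard
      = ∑ x : K, #{y | b * y ^ p ^ k + b ^ p ^ k * y = x ^ (p ^ k + 1)} := by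
        rw [Set.ncard_eq_toFinset_card', Set.toFinset_ofPred, card_filter, Fintype.sum_prod_type]
        simp only [card_filter, eq_comm]
    _ = ∑ _x : K, p ^ k := sum_congr rfl fun x _ =>
        card_filter_mul_pow_add_pow_mul_eq hK hb (pow_succ_pow_eq_self_of_card_eq_sq hK x)
    _ = (p ^ k) ^ 3 := by rw [sum_const, card_univ, hK, smul_eq_mul]; ring
end

section
/- Let q be a prime power, K a finite field with q² elements, λ a generator of K*, G the group generated by g(x,y) = (λx, λ^{q+1}y) acting on K × K, and b ∈ K*. Set S_b = {(x,y) ∈ K × K : (x,y) ≠ (0,0) and x^{q+1} = b·y^q + b^q·y}. Then S_b is G-invariant and is the disjoint union of exactly q + 1 G-orbits: one orbit of size q − 1 consisting of the points of S_b with x = 0, and q orbits of size q² − 1 consisting of points with x ≠ 0. -/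
/-!
Since `λ` generates `K*`, the orbit of `(x, y)` is `{(w x, w^{q+1} y) : w ∈ K*}`. The map
`ψ(y) = b y^q + b^q y` is additive (it is `y ↦ Tr(b^q y)` for the trace down to the subfield
of order `q`); its kernel has at most `q` elements, being the zero set of a polynomial of degree
`q`, and its image lies in the `q`-element fixed field of `z ↦ z^q`. As `|K| = q²`, kernel and
image both have exactly `q` elements, so the image is that subfield and every fibre of `ψ` has
`q` points.

The points of `S_b` with `x = 0` are the `q - 1` nonzero zeros of `ψ`, and the orbit of each has
`q - 1` points because `w ↦ w^{q+1}` on `K*` has image of order `q - 1` (the same kernel/image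
count); so they form a single orbit. An orbit with `x ≠ 0` has `q² - 1` points and meets the line
`x = 1` in exactly one point `(1, y)`, where `ψ(y) = 1`; there are `q` such `y`.
-/

/-- The permutation `(x, y) ↦ (λ x, λ^{q+1} y)` of `K × K`. -/
def gPerm {K : Type*} [Field K] (q : ℕ) (u : Kˣ) : Equiv.Perm (K × K) :=
  Equiv.prodCongr (MulAction.toPerm u) (MulAction.toPerm (u ^ (q + 1)))

def gGroup {K : Type*} [Field K] (q : ℕ) (u : Kˣ) : Subgroup (Equiv.Perm (K × K)) :=
  Subgroup.zpowers (gPerm q u)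

open MulAction Polynomial

@[to_additive]
lemma MonoidHom.card_ker_eq_and_card_range_eq {G H : Type*} [Group G] [Group H] [Finite G]
    (f : G →* H) {a b : ℕ} (hker : Nat.card f.ker ≤ a) (hrange : Nat.card f.range ≤ b)
    (hG : Nat.card G = a * b) : Nat.card f.ker = a ∧ Nat.card f.range = b := by
  have hmul : Nat.card f.ker * Nat.card f.range = a * b := by
    rw [← Subgroup.index_ker, Subgroup.card_mul_index, hG]
  have : Finite f.range := .of_surjective _ f.rangeRestrict_surjective
  have hk : 0 < Nat.card f.ker := Nat.card_pos
  have hr : 0 < Nat.card f.range := Nat.card_pos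
  constructor <;> nlinarith

lemma card_range_powMonoidHom_units {R : Type*} [CommRing R] [IsDomain R] [Finite Rˣ]
    {m n : ℕ} (h : Nat.card Rˣ = m * n) :
    Nat.card (powMonoidHom m : Rˣ →* Rˣ).range = n := by
  have hmn : m * n ≠ 0 := h ▸ Nat.card_pos.ne'
  have : NeZero m := ⟨left_ne_zero_of_mul hmn⟩
  have : NeZero n := ⟨right_ne_zero_of_mul hmn⟩
  refine (MonoidHom.card_ker_eq_and_card_range_eq (G := Rˣ) (H := Rˣ) (powMonoidHom m)
    ?_ ?_ h).2
  · rw [← rootsOfUnity_eq_ker]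
    exact card_rootsOfUnity R m
  · refine (Subgroup.card_le_of_le ?_).trans (card_rootsOfUnity R n)
    rintro _ ⟨x, rfl⟩
    rw [mem_rootsOfUnity, powMonoidHom_apply, ← pow_mul, ← h, pow_card_eq_one']

lemma ncard_setOf_orbit_eq_add {G α : Type*} [Group G] [MulAction G α] [Finite α]
    (S : Set α) (P : α → Prop) (hP : ∀ s, ∀ t ∈ orbit G s, P t ↔ P s) :
    {O | ∃ s ∈ S, O = orbit G s}.ncard =
      {O | ∃ s ∈ S, P s ∧ O = orbit G s}.ncard +
        {O | ∃ s ∈ S, ¬P s ∧ O = orbit G s}.ncard := by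
  have hdisj : Disjoint {O | ∃ s ∈ S, P s ∧ O = orbit G s}
      {O | ∃ s ∈ S, ¬P s ∧ O = orbit G s} := by
    refine Set.disjoint_left.mpr ?_
    rintro _ ⟨s, -, hs, rfl⟩ ⟨t, -, ht, hst⟩
    exact ht ((hP s t (hst ▸ mem_orbit_self t)).mpr hs)
  rw [← Set.ncard_union_eq hdisj (Set.toFinite _) (Set.toFinite _)]
  congr 1
  ext O
  simp only [Set.mem_ofPred_eq, Set.mem_union]
  constructor
  · rintro ⟨s, hs, rfl⟩
    by_cases h : P s
    exacts [.inl ⟨s, hs, h, rfl⟩, .inr ⟨s, hs, h, rfl⟩]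
  · rintro (⟨s, hs, -, rfl⟩ | ⟨s, hs, -, rfl⟩) <;> exact ⟨s, hs, rfl⟩

section FiniteField

variable {K : Type*} [Field K] [Fintype K] {q : ℕ}

lemma add_pow_eq_of_dvd_card (hq : IsPrimePow q) (hdvd : q ∣ Fintype.card K) (x y : K) :
    (x + y) ^ q = x ^ q + y ^ q := by
  obtain ⟨p, k, hp, hk, rfl⟩ := hq
  rw [← Nat.prime_iff] at hp
  obtain ⟨n, hr, hcard⟩ := FiniteField.card K (ringChar K)
  have hpr : p = ringChar K := (Nat.prime_dvd_prime_iff_eq hp hr).mp <|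
    hp.dvd_of_dvd_pow (hcard ▸ (dvd_pow_self p hk.ne').trans hdvd)
  have : CharP K p := hpr ▸ ringChar.charP K
  have : Fact p.Prime := ⟨hp⟩
  exact add_pow_char_pow x y p k

lemma ncard_rootSet_X_pow_sub_X_le {K : Type*} [Field K] {q : ℕ} (hq : 1 < q) :
    ((X ^ q - X : K[X]).rootSet K).ncard ≤ q :=
  (ncard_rootSet_le _ K).trans (FiniteField.X_pow_card_sub_X_natDegree_eq K hq).le

lemma one_lt_of_card_eq_sq (hK : Fintype.card K = q ^ 2) : 1 < q := by
  have := hK ▸ Fintype.one_lt_card (α := K)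
  nlinarith

lemma card_units_eq_of_card_eq_sq (hK : Fintype.card K = q ^ 2) :
    Nat.card Kˣ = q ^ 2 - 1 := by
  classical
  rw [Nat.card_eq_fintype_card, Fintype.card_units, hK]

end FiniteField

section HermitianTrace

variable {K : Type*} [Field K] {q : ℕ} (hadd : ∀ x y : K, (x + y) ^ q = x ^ q + y ^ q)

def hermitianTrace (b : K) : K →+ K :=
  AddMonoidHom.mk' (fun y => b * y ^ q + b ^ q * y) fun x y => by simp only [hadd]; ring

@[simp]
lemma hermitianTrace_apply (b y : K) : hermitianTrace hadd b y = b * y ^ q + b ^ q * y := rfl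

lemma card_ker_hermitianTrace_le (hq : 1 < q) {b : K} (hb : b ≠ 0) :
    Nat.card (hermitianTrace hadd b).ker ≤ q := by
  set P : K[X] := C b * X ^ q + C (b ^ q) * X
  have hP : P ≠ 0 := fun h => hb <| by
    simpa only [P, coeff_add, coeff_C_mul, coeff_X_pow, coeff_X, if_pos, hq.ne, if_false,
      mul_one, mul_zero, add_zero, coeff_zero] using congrArg (coeff · q) h
  have hdeg : P.natDegree ≤ q := by
    simp only [P]; compute_degree; omega
  calc Nat.card (hermitianTrace hadd b).ker
      ≤ (P.rootSet K).ncard := by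
        rw [← Nat.card_coe_set_eq]
        refine Set.ncard_le_ncard (fun y hy => ?_) (Set.toFinite _)
        exact mem_rootSet.mpr ⟨hP, by simpa [P] using hy⟩
    _ ≤ q := (ncard_rootSet_le P K).trans hdeg

lemma range_hermitianTrace_subset (hq : 1 < q) (hpow : ∀ x : K, x ^ q ^ 2 = x) (b : K) :
    ((hermitianTrace hadd b).range : Set K) ⊆ (X ^ q - X : K[X]).rootSet K := by
  rintro _ ⟨y, rfl⟩
  refine mem_rootSet.mpr ⟨FiniteField.X_pow_card_sub_X_ne_zero K hq, ?_⟩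
  have hfix : (b * y ^ q + b ^ q * y) ^ q = b * y ^ q + b ^ q * y := by
    rw [hadd, mul_pow, mul_pow, ← pow_mul, ← pow_mul, ← sq, hpow, hpow, add_comm]
  simp [hfix]

variable [Fintype K] (hK : Fintype.card K = q ^ 2) {b : K} (hb : b ≠ 0)
include hK hb

lemma card_ker_range_hermitianTrace :
    Nat.card (hermitianTrace hadd b).ker = q ∧ Nat.card (hermitianTrace hadd b).range = q := by
  have hq := one_lt_of_card_eq_sq hK
  refine (hermitianTrace hadd b).card_ker_eq_and_card_range_eq
    (card_ker_hermitianTrace_le hadd hq hb) ?_ (by rw [Nat.card_eq_fintype_card, hK, sq])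
  rw [← SetLike.coe_sort_coe, Nat.card_coe_set_eq]
  exact (Set.ncard_le_ncard (range_hermitianTrace_subset hadd hq (hK ▸ FiniteField.pow_card) b)
    (Set.toFinite _)).trans (ncard_rootSet_X_pow_sub_X_le hq)

lemma one_mem_range_hermitianTrace : (1 : K) ∈ (hermitianTrace hadd b).range := by
  have hq := one_lt_of_card_eq_sq hK
  have hsub := range_hermitianTrace_subset hadd hq (hK ▸ FiniteField.pow_card) b
  have hrange := (card_ker_range_hermitianTrace hadd hK hb).2
  rw [← SetLike.coe_sort_coe, Nat.card_coe_set_eq] at hrange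
  have hroots := ncard_rootSet_X_pow_sub_X_le (K := K) hq
  rw [← SetLike.mem_coe, Set.eq_of_subset_of_ncard_le hsub (by omega) (Set.toFinite _)]
  exact mem_rootSet.mpr ⟨FiniteField.X_pow_card_sub_X_ne_zero K hq, by simp⟩

lemma card_hermitianTrace_preimage_one : Nat.card (hermitianTrace hadd b ⁻¹' {1}) = q := by
  obtain ⟨y, hy⟩ := one_mem_range_hermitianTrace hadd hK hb
  rw [← hy, Nat.card_congr ((hermitianTrace hadd b).fiberEquivKer y),
    (card_ker_range_hermitianTrace hadd hK hb).1]

end HermitianTrace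

section WeightedScaling

variable {K : Type*} [Field K] {q : ℕ} {u : Kˣ}

def weightedScaling (q : ℕ) : Kˣ →* Equiv.Perm (K × K) where
  toFun w := Equiv.prodCongr (MulAction.toPerm w) (MulAction.toPerm (w ^ (q + 1)))
  map_one' := by ext <;> simp
  map_mul' _ _ := by ext <;> simp [mul_pow, mul_smul]

@[simp]
lemma weightedScaling_apply (w : Kˣ) (s : K × K) :
    weightedScaling q w s = ((w : K) * s.1, (w : K) ^ (q + 1) * s.2) := rfl

lemma gGroup_eq_range (hu : ∀ x : Kˣ, x ∈ Subgroup.zpowers u) :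
    gGroup q u = (weightedScaling q).range := by
  rw [MonoidHom.range_eq_map, ← (Subgroup.eq_top_iff' _).mpr hu, MonoidHom.map_zpowers]
  rfl

variable (hu : ∀ x : Kˣ, x ∈ Subgroup.zpowers u)
include hu

lemma mem_orbit_gGroup_iff {s t : K × K} :
    t ∈ orbit (gGroup q u) s ↔ ∃ w : Kˣ, weightedScaling q w s = t := by
  constructor
  · rintro ⟨⟨σ, hσ⟩, rfl⟩
    rw [gGroup_eq_range hu] at hσ
    obtain ⟨w, rfl⟩ := hσ
    exact ⟨w, rfl⟩
  · rintro ⟨w, rfl⟩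
    exact ⟨⟨weightedScaling q w, gGroup_eq_range hu ▸ ⟨w, rfl⟩⟩, rfl⟩

lemma orbit_gGroup (s : K × K) :
    orbit (gGroup q u) s = Set.range fun w : Kˣ => weightedScaling q w s :=
  Set.ext fun _ => mem_orbit_gGroup_iff hu

lemma fst_eq_zero_iff_of_mem_orbit {s t : K × K} (ht : t ∈ orbit (gGroup q u) s) :
    t.1 = 0 ↔ s.1 = 0 := by
  obtain ⟨w, rfl⟩ := (mem_orbit_gGroup_iff hu).mp ht
  simp

lemma ncard_orbit_of_fst_ne_zero {s : K × K} (hs : s.1 ≠ 0) :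
    (orbit (gGroup q u) s).ncard = Nat.card Kˣ := by
  refine (orbit_gGroup hu s).symm ▸ Set.ncard_range_of_injective fun w w' h => ?_
  simpa [hs, Units.val_inj] using congrArg Prod.fst h

lemma ncard_orbit_of_fst_eq_zero {s : K × K} (h1 : s.1 = 0) (h2 : s.2 ≠ 0) :
    (orbit (gGroup q u) s).ncard = Nat.card (powMonoidHom (q + 1) : Kˣ →* Kˣ).range := by
  have hrange : (Set.range fun w : Kˣ => weightedScaling q w s) =
      (fun z : Kˣ => ((0 : K), (z : K) * s.2)) '' (powMonoidHom (q + 1) : Kˣ →* Kˣ).range := by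
    rw [MonoidHom.coe_range, ← Set.range_comp]
    congr 1
    ext w <;> simp [h1]
  have hinj : Function.Injective fun z : Kˣ => ((0 : K), (z : K) * s.2) := fun z z' h => by
    simpa [h2, Units.val_inj] using congrArg Prod.snd h
  rw [orbit_gGroup hu, hrange, Set.ncard_image_of_injective _ hinj, ← SetLike.coe_sort_coe,
    Nat.card_coe_set_eq]

lemma exists_mk_one_mem_orbit {s : K × K} (hs : s.1 ≠ 0) :
    ∃ y : K, ((1 : K), y) ∈ orbit (gGroup q u) s :=
  ⟨_, (mem_orbit_gGroup_iff hu).mpr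
    ⟨(Units.mk0 s.1 hs)⁻¹, Prod.ext (by simp only [weightedScaling_apply]; simp [hs]) rfl⟩⟩

lemma eq_of_mk_one_mem_orbit {y y' : K}
    (h : ((1 : K), y) ∈ orbit (gGroup q u) ((1 : K), y')) : y = y' := by
  obtain ⟨w, hw⟩ := (mem_orbit_gGroup_iff hu).mp h
  obtain ⟨hw1, hwy⟩ := Prod.ext_iff.mp hw
  simp only [weightedScaling_apply, mul_one] at hw1 hwy
  simpa [hw1] using hwy.symm

end WeightedScaling

section HermitianCurve

variable {K : Type*} [Field K] {q : ℕ}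

def puncturedHermitianCurve (q : ℕ) (b : K) : Set (K × K) :=
  {s | s ≠ (0, 0) ∧ s.1 ^ (q + 1) = b * s.2 ^ q + b ^ q * s.2}

lemma weightedScaling_mem_puncturedHermitianCurve (hpow : ∀ x : K, x ^ q ^ 2 = x) {b : K}
    {s : K × K} (hs : s ∈ puncturedHermitianCurve q b) (w : Kˣ) :
    weightedScaling q w s ∈ puncturedHermitianCurve q b := by
  obtain ⟨hne, heq⟩ := hs
  have hw : (w : K) ^ ((q + 1) * q) = (w : K) ^ (q + 1) := by
    rw [add_mul, one_mul, pow_add, ← sq, hpow, pow_succ, mul_comm]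
  refine ⟨fun h => hne ?_, ?_⟩
  · simpa [Prod.ext_iff] using h
  · simp only [weightedScaling_apply]
    rw [mul_pow, heq, mul_pow, ← pow_mul, hw]
    ring

variable (hadd : ∀ x y : K, (x + y) ^ q = x ^ q + y ^ q) {b : K}

lemma setOf_mem_puncturedHermitianCurve_fst_eq_zero :
    {s ∈ puncturedHermitianCurve q b | s.1 = 0} =
      (fun y => ((0 : K), y)) '' ((hermitianTrace hadd b).ker \ {0} : Set K) := by
  ext ⟨x, y⟩
  simp only [puncturedHermitianCurve, Set.mem_ofPred_eq, Set.mem_image, Set.mem_sdiff,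
    SetLike.mem_coe, AddMonoidHom.mem_ker, hermitianTrace_apply, Set.mem_singleton_iff,
    Prod.mk.injEq]
  constructor
  · rintro ⟨⟨hne, heq⟩, rfl⟩
    exact ⟨y, ⟨by simpa using heq.symm, fun hy => hne (by simp [hy])⟩, rfl, rfl⟩
  · rintro ⟨y, ⟨hy, hy0⟩, rfl, rfl⟩
    exact ⟨⟨by simpa using hy0, by simpa using hy.symm⟩, rfl⟩

lemma mk_one_mem_puncturedHermitianCurve_iff (y : K) :
    ((1 : K), y) ∈ puncturedHermitianCurve q b ↔ hermitianTrace hadd b y = 1 := by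
  simp [puncturedHermitianCurve, eq_comm]

variable [Fintype K] (hK : Fintype.card K = q ^ 2) (hb : b ≠ 0)
include hadd hK hb

lemma ncard_setOf_mem_puncturedHermitianCurve_fst_eq_zero :
    {s ∈ puncturedHermitianCurve q b | s.1 = 0}.ncard = q - 1 := by
  rw [setOf_mem_puncturedHermitianCurve_fst_eq_zero hadd,
    Set.ncard_image_of_injective _ (Prod.mk_right_injective 0),
    Set.ncard_sdiff_singleton_of_mem (zero_mem _), ← Nat.card_coe_set_eq, SetLike.coe_sort_coe,
    (card_ker_range_hermitianTrace hadd hK hb).1]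

end HermitianCurve

section Orbits

variable {K : Type*} [Field K] [Fintype K] {q : ℕ} {u : Kˣ} {b : K}
  (hK : Fintype.card K = q ^ 2) (hu : ∀ x : Kˣ, x ∈ Subgroup.zpowers u)
include hK hu

lemma orbit_subset_puncturedHermitianCurve {s : K × K} (hs : s ∈ puncturedHermitianCurve q b) :
    orbit (gGroup q u) s ⊆ puncturedHermitianCurve q b := by
  rintro t ht
  obtain ⟨w, rfl⟩ := (mem_orbit_gGroup_iff hu).mp ht
  exact weightedScaling_mem_puncturedHermitianCurve (hK ▸ FiniteField.pow_card) hs w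

variable (hadd : ∀ x y : K, (x + y) ^ q = x ^ q + y ^ q) (hb : b ≠ 0)
include hadd hb

lemma orbit_eq_of_fst_eq_zero {s : K × K} (hs : s ∈ puncturedHermitianCurve q b) (h0 : s.1 = 0) :
    orbit (gGroup q u) s = {t ∈ puncturedHermitianCurve q b | t.1 = 0} := by
  have hsub : orbit (gGroup q u) s ⊆ {t ∈ puncturedHermitianCurve q b | t.1 = 0} :=
    fun t ht => ⟨orbit_subset_puncturedHermitianCurve hK hu hs ht,
      (fst_eq_zero_iff_of_mem_orbit hu ht).mpr h0⟩
  refine Set.eq_of_subset_of_ncard_le hsub ?_ (Set.toFinite _)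
  rw [ncard_setOf_mem_puncturedHermitianCurve_fst_eq_zero hadd hK hb,
    ncard_orbit_of_fst_eq_zero hu h0 fun h => hs.1 (Prod.ext h0 h),
    card_range_powMonoidHom_units ((card_units_eq_of_card_eq_sq hK).trans
      (by simpa using Nat.sq_sub_sq q 1))]

lemma setOf_orbit_fst_eq_zero :
    {O | ∃ s ∈ puncturedHermitianCurve q b, s.1 = 0 ∧ O = orbit (gGroup q u) s} =
      {{t ∈ puncturedHermitianCurve q b | t.1 = 0}} := by
  ext O
  constructor
  · rintro ⟨s, hs, h0, rfl⟩
    exact orbit_eq_of_fst_eq_zero hK hu hadd hb hs h0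
  · rintro rfl
    obtain ⟨s, hs, h0⟩ := Set.nonempty_of_ncard_ne_zero <| by
      rw [ncard_setOf_mem_puncturedHermitianCurve_fst_eq_zero hadd hK hb]
      have := one_lt_of_card_eq_sq hK
      omega
    exact ⟨s, hs, h0, (orbit_eq_of_fst_eq_zero hK hu hadd hb hs h0).symm⟩

lemma ncard_setOf_orbit_fst_ne_zero :
    {O | ∃ s ∈ puncturedHermitianCurve q b, s.1 ≠ 0 ∧ O = orbit (gGroup q u) s}.ncard =
      q := by
  have himage :
      {O | ∃ s ∈ puncturedHermitianCurve q b, s.1 ≠ 0 ∧ O = orbit (gGroup q u) s} =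
      (fun y => orbit (gGroup q u) ((1 : K), y)) '' (hermitianTrace hadd b ⁻¹' {1}) := by
    ext O
    constructor
    · rintro ⟨s, hs, h1, rfl⟩
      obtain ⟨y, hy⟩ := exists_mk_one_mem_orbit hu h1
      exact ⟨y, (mk_one_mem_puncturedHermitianCurve_iff hadd y).mp
        (orbit_subset_puncturedHermitianCurve hK hu hs hy), orbit_eq_iff.mpr hy⟩
    · rintro ⟨y, hy, rfl⟩
      exact ⟨_, (mk_one_mem_puncturedHermitianCurve_iff hadd y).mpr hy, one_ne_zero, rfl⟩
  have hinj :
      Set.InjOn (fun y => orbit (gGroup q u) ((1 : K), y)) (hermitianTrace hadd b ⁻¹' {1}) :=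
    fun y _ y' _ h => eq_of_mk_one_mem_orbit hu (by simp only at h; exact h ▸ mem_orbit_self _)
  rw [himage, hinj.ncard_image, ← Nat.card_coe_set_eq,
    card_hermitianTrace_preimage_one hadd hK hb]

end Orbits

/-- The punctured affine Hermitian curve `S_b` is invariant under
`G = ⟨(x,y) ↦ (λx, λ^{q+1}y)⟩` and splits into exactly `q + 1` `G`-orbits: one orbit of size
`q - 1` consisting of its points with `x = 0`, and `q` orbits of size `q² - 1` consisting of
points with `x ≠ 0`. -/
theorem hermitian_curve_orbit_decomposition
    (q : ℕ) (hq : IsPrimePow q)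
    (K : Type*) [Field K] [Fintype K] (hK : Fintype.card K = q ^ 2)
    (u : Kˣ) (hu : ∀ x : Kˣ, x ∈ Subgroup.zpowers u)
    (b : K) (hb : b ≠ 0) :
    ∀ S : Set (K × K), S = {s : K × K | s ≠ (0, 0) ∧
        s.1 ^ (q + 1) = b * s.2 ^ q + b ^ q * s.2} →
      (∀ σ ∈ gGroup q u, ∀ s ∈ S, σ s ∈ S) ∧
      (∀ s ∈ S, MulAction.orbit (gGroup q u) s ⊆ S) ∧
      {O : Set (K × K) | ∃ s ∈ S, O = MulAction.orbit (gGroup q u) s}.ncard = q + 1 ∧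
      (∀ s ∈ S, s.1 = 0 → (MulAction.orbit (gGroup q u) s).ncard = q - 1) ∧
      {O : Set (K × K) | ∃ s ∈ S, s.1 = 0 ∧ O = MulAction.orbit (gGroup q u) s}.ncard = 1 ∧
      (∀ s ∈ S, s.1 ≠ 0 → (MulAction.orbit (gGroup q u) s).ncard = q ^ 2 - 1) ∧
      {O : Set (K × K) | ∃ s ∈ S, s.1 ≠ 0 ∧ O = MulAction.orbit (gGroup q u) s}.ncard = q := by
  intro S hS
  replace hS : S = puncturedHermitianCurve q b := hS
  subst hS
  have hadd := add_pow_eq_of_dvd_card hq (hK ▸ dvd_pow_self q two_ne_zero)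
  have hzero := setOf_orbit_fst_eq_zero (b := b) hK hu hadd hb
  have hnonzero := ncard_setOf_orbit_fst_ne_zero (b := b) hK hu hadd hb
  refine ⟨?_, fun s hs => orbit_subset_puncturedHermitianCurve hK hu hs, ?_, fun s hs h0 => ?_,
    by rw [hzero, Set.ncard_singleton], fun s _ h1 => ?_, hnonzero⟩
  · rw [gGroup_eq_range hu]
    rintro _ ⟨w, rfl⟩ s hs
    exact weightedScaling_mem_puncturedHermitianCurve (hK ▸ FiniteField.pow_card) hs w
  · rw [ncard_setOf_orbit_eq_add _ (fun s => s.1 = 0) fun s t => fst_eq_zero_iff_of_mem_orbit hu,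
      hzero, Set.ncard_singleton, add_comm]
    exact congrArg (· + 1) hnonzero
  · rw [orbit_eq_of_fst_eq_zero hK hu hadd hb hs h0,
      ncard_setOf_mem_puncturedHermitianCurve_fst_eq_zero hadd hK hb]
  · rw [ncard_orbit_of_fst_ne_zero hu h1, card_units_eq_of_card_eq_sq hK]
end

section
/- Let q > 2 be a prime power, K a finite field with q² elements, λ a generator of K*, and G the group generated by g(x,y) = (λx, λ^{q+1}y) acting on K × K. Let Ω be the set of G-orbits on (K × K) \ {(0,0)} (so |Ω| = q² + q + 1). Define a family 𝓛 of subsets of Ω as follows: (i) the set of orbits contained in the line {(0,y) : y ≠ 0}; (ii) for each b ∈ K*, the set of orbits contained in S_b = {(x,y) ≠ (0,0) : x^{q+1} = b y^q + b^q y}; (iii) for each of the q+1 cosets cF_q* of F_q* in K*, the set of orbits contained in {(x,y) ≠ (0,0) : c^q y^q + c y = 0}. Then 𝓛 consists of q² + q + 1 distinct subsets, each member of 𝓛 contains exactly q + 1 orbits, any two distinct members of 𝓛 meet in exactly one orbit, and any two distinct orbits lie in exactly one common member of 𝓛; that is, (Ω, 𝓛) is a projective plane of order q. -/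
namespace Configuration.ProjectivePlane

variable {P L : Type*} [Membership P L] [ProjectivePlane P L] [Finite P] [Finite L]

theorem natCard_points : Nat.card P = order P L ^ 2 + order P L + 1 := by
  have := Fintype.ofFinite P
  rw [Nat.card_eq_fintype_card, card_points (P := P) (L := L)]

theorem natCard_lines : Nat.card L = order P L ^ 2 + order P L + 1 := by
  have := Fintype.ofFinite L
  rw [Nat.card_eq_fintype_card, card_lines (P := P) (L := L)]

end Configuration.ProjectivePlane

namespace HermitianPlane

variable {K : Type*} [Field K] {q : ℕ}

section FiniteField

variable [Fintype K] (hK : Fintype.card K = q ^ 2)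
include hK

theorem one_lt_of_card_eq_sq : 1 < q := by
  have h := Fintype.one_lt_card (α := K)
  rw [hK] at h
  by_contra! hq
  interval_cases q <;> simp at h

theorem pow_pow_of_card_eq_sq (x : K) : (x ^ q) ^ q = x := by
  rw [← pow_mul, ← sq, ← hK, FiniteField.pow_card]

theorem add_pow_of_card_eq_sq (x y : K) : (x + y) ^ q = x ^ q + y ^ q := by
  obtain ⟨n, hp, hcard⟩ := FiniteField.card K (ringChar K)
  have := Fact.mk hp
  obtain ⟨m, -, rfl⟩ := (Nat.dvd_prime_pow hp).1 ⟨q, by rw [← hcard, hK, sq]⟩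
  exact add_pow_char_pow x y _ _

theorem sub_pow_of_card_eq_sq (x y : K) : (x - y) ^ q = x ^ q - y ^ q := by
  rw [eq_sub_iff_add_eq, ← add_pow_of_card_eq_sq hK, sub_add_cancel]

theorem pow_succ_pow_of_card_eq_sq (x : K) : (x ^ (q + 1)) ^ q = x ^ (q + 1) := by
  rw [pow_succ, mul_pow, pow_pow_of_card_eq_sq hK, mul_comm]

end FiniteField

theorem pow_eq_self_iff_pow_sub_one_eq_one {t : K} (hq : q ≠ 0) (ht : t ≠ 0) :
    t ^ q = t ↔ t ^ (q - 1) = 1 := by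
  rw [← pow_sub_one_mul hq, mul_eq_right₀ ht]

section Generator

variable [Fintype K] {u : Kˣ} (hK : Fintype.card K = q ^ 2)
  (hu : ∀ x : Kˣ, x ∈ Subgroup.zpowers u)
include hK hu

theorem isPrimitiveRoot_pow_succ : IsPrimitiveRoot ((u : K) ^ (q + 1)) (q - 1) := by
  classical
  have hq := one_lt_of_card_eq_sq hK
  have hu' : IsPrimitiveRoot (u : K) (q ^ 2 - 1) := by
    rw [← hK, ← Fintype.card_units, ← Nat.card_eq_fintype_card,
      ← orderOf_eq_card_of_forall_mem_zpowers hu, ← orderOf_units]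
    exact IsPrimitiveRoot.orderOf _
  exact hu'.pow (Nat.sub_pos_of_lt (by nlinarith)) (by simpa using Nat.sq_sub_sq q 1)

theorem ncard_pow_eq_self : {t : K | t ^ q = t}.ncard = q := by
  have hq := one_lt_of_card_eq_sq hK
  have hroots : {t : K | t ^ q = t} = insert 0 ↑(Polynomial.nthRootsFinset (q - 1) (1 : K)) := by
    ext t
    rcases eq_or_ne t 0 with rfl | ht
    · simp [zero_pow (by omega : q ≠ 0)]
    · simp [Polynomial.mem_nthRootsFinset (by omega : 0 < q - 1), ht,
        pow_eq_self_iff_pow_sub_one_eq_one (by omega : q ≠ 0) ht]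
  rw [hroots, Set.ncard_insert_of_notMem (by simp [Polynomial.mem_nthRootsFinset (by omega :
      0 < q - 1), zero_pow (by omega : q - 1 ≠ 0)]), Set.ncard_coe_finset,
    (isPrimitiveRoot_pow_succ hK hu).card_nthRootsFinset]
  omega

theorem exists_pow_succ_eq {t : K} (ht0 : t ≠ 0) (ht : t ^ q = t) :
    ∃ v : Kˣ, (v : K) ^ (q + 1) = t := by
  have hq := one_lt_of_card_eq_sq hK
  have : NeZero (q - 1) := ⟨by omega⟩
  obtain ⟨i, -, hi⟩ := (isPrimitiveRoot_pow_succ hK hu).eq_pow_of_pow_eq_one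
    ((pow_eq_self_iff_pow_sub_one_eq_one (by omega) ht0).1 ht)
  exact ⟨u ^ i, by rw [Units.val_pow_eq_pow_val, ← pow_mul, mul_comm, pow_mul, hi]⟩

end Generator

def traceForm (q : ℕ) (b z : K) : K := b * z ^ q + b ^ q * z

theorem traceForm_comm (b z : K) : traceForm q b z = traceForm q z b := by
  unfold traceForm; ring

theorem traceForm_zero_left (hq : q ≠ 0) (z : K) : traceForm q 0 z = 0 := by
  simp [traceForm, hq]

theorem traceForm_zero_right (hq : q ≠ 0) (b : K) : traceForm q b 0 = 0 := by
  simp [traceForm, hq]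

theorem traceForm_mul_left {t : K} (ht : t ^ q = t) (b z : K) :
    traceForm q (t * b) z = t * traceForm q b z := by
  unfold traceForm; rw [mul_pow, ht]; ring

theorem traceForm_mul_right {t : K} (ht : t ^ q = t) (b z : K) :
    traceForm q b (t * z) = t * traceForm q b z := by
  unfold traceForm; rw [mul_pow, ht]; ring

theorem traceForm_eq_zero_iff {b e : K} (hb : b ≠ 0) (he : e ≠ 0) (hbe : traceForm q b e = 0)
    (z : K) : traceForm q b z = 0 ↔ ∃ t, t ^ q = t ∧ z = t * e := by
  refine ⟨fun hbz => ⟨z / e, ?_, (div_mul_cancel₀ z he).symm⟩, ?_⟩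
  · rw [div_pow, div_eq_div_iff (pow_ne_zero _ he) he]
    unfold traceForm at hbe hbz
    apply mul_left_cancel₀ hb
    linear_combination e * hbz - z * hbe
  · rintro ⟨t, ht, rfl⟩
    rw [traceForm_mul_right ht, hbe, mul_zero]

section Orthogonality

variable [Fintype K] (hK : Fintype.card K = q ^ 2)
include hK

theorem traceForm_pow (b z : K) : traceForm q b z ^ q = traceForm q b z := by
  unfold traceForm
  rw [add_pow_of_card_eq_sq hK, mul_pow, mul_pow, pow_pow_of_card_eq_sq hK,
    pow_pow_of_card_eq_sq hK, add_comm]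

theorem traceForm_add_right (b z z' : K) :
    traceForm q b (z + z') = traceForm q b z + traceForm q b z' := by
  unfold traceForm; rw [add_pow_of_card_eq_sq hK]; ring

theorem traceForm_sub_right (b z z' : K) :
    traceForm q b (z - z') = traceForm q b z - traceForm q b z' := by
  unfold traceForm; rw [sub_pow_of_card_eq_sq hK]; ring

variable {u : Kˣ} (hu : ∀ x : Kˣ, x ∈ Subgroup.zpowers u)
include hu

/-- `T(b, ·)` maps the `q^2` elements of `K` into `𝔽_q`, so it is not injective. -/
theorem exists_traceForm_eq_zero (b : K) : ∃ e ≠ 0, traceForm q b e = 0 := by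
  classical
  have hq := one_lt_of_card_eq_sq hK
  obtain ⟨z, z', hne, hzz'⟩ := Fintype.exists_ne_map_eq_of_card_lt
    (fun z => (⟨traceForm q b z, traceForm_pow hK b z⟩ : {t : K // t ^ q = t})) (by
      rw [hK, ← Nat.card_eq_fintype_card]
      change Nat.card {t : K | t ^ q = t} < _
      rw [Nat.card_coe_set_eq, ncard_pow_eq_self hK hu]
      nlinarith)
  refine ⟨z - z', sub_ne_zero.2 hne, ?_⟩
  rw [traceForm_sub_right hK, sub_eq_zero]
  exact congrArg Subtype.val hzz'

theorem exists_traceForm_ne_zero {b : K} (hb : b ≠ 0) : ∃ y, traceForm q b y ≠ 0 := by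
  have hq := one_lt_of_card_eq_sq hK
  obtain ⟨y, hy⟩ : ∃ y : K, y ^ q ≠ y := by
    by_contra! h
    have := ncard_pow_eq_self hK hu
    simp only [h, Set.ofPred_true, Set.ncard_univ, Nat.card_eq_fintype_card, hK] at this
    nlinarith
  by_contra! h
  have h1 := h 1
  have h2 := h y
  unfold traceForm at h1 h2
  exact hy (mul_left_cancel₀ hb (by linear_combination h2 - y * h1))

theorem exists_traceForm_eq_and_eq_or {b b' a a' : K} (ha : a ^ q = a) (ha' : a' ^ q = a') :
    (∃ z, traceForm q b z = a ∧ traceForm q b' z = a') ∨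
      ∃ y ≠ 0, traceForm q b y = 0 ∧ traceForm q b' y = 0 := by
  by_cases h : ∃ y ≠ 0, traceForm q b y = 0 ∧ traceForm q b' y = 0
  · exact Or.inr h
  push Not at h
  obtain ⟨e, he, hb'e⟩ := exists_traceForm_eq_zero hK hu b'
  obtain ⟨e', he', hbe'⟩ := exists_traceForm_eq_zero hK hu b
  have hbe : traceForm q b e ≠ 0 := fun h0 => h e he h0 hb'e
  have hb'e' : traceForm q b' e' ≠ 0 := fun h0 => h e' he' hbe' h0
  have hdiv : ∀ {x y : K}, x ^ q = x → y ^ q = y → (x / y) ^ q = x / y := fun hx hy => by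
    rw [div_pow, hx, hy]
  have hα := hdiv ha (traceForm_pow hK b e)
  have hβ := hdiv ha' (traceForm_pow hK b' e')
  refine Or.inl ⟨a / traceForm q b e * e + a' / traceForm q b' e' * e', ?_, ?_⟩
  · rw [traceForm_add_right hK, traceForm_mul_right hα, traceForm_mul_right hβ, hbe', mul_zero,
      add_zero, div_mul_cancel₀ _ hbe]
  · rw [traceForm_add_right hK, traceForm_mul_right hα, traceForm_mul_right hβ, hb'e, mul_zero,
      zero_add, div_mul_cancel₀ _ hb'e']

end Orthogonality

def gPermHom (q : ℕ) : Kˣ →* Equiv.Perm (K × K) where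
  toFun := gPerm q
  map_one' := by ext <;> simp [gPerm]
  map_mul' v w := by ext <;> simp [gPerm, mul_pow, mul_smul]

def affinePoint (q : ℕ) (u : Kˣ) (z : K) : Set (K × K) :=
  MulAction.orbit (gGroup q u) ((1 : K), z)

def pointAtInfinity (q : ℕ) (u : Kˣ) (y : K) : Set (K × K) :=
  MulAction.orbit (gGroup q u) ((0 : K), y)

variable (K) in
def orbitPoints (q : ℕ) (u : Kˣ) : Set (Set (K × K)) :=
  {O | ∃ s : K × K, s ≠ (0, 0) ∧ O = MulAction.orbit (gGroup q u) s}

theorem affinePoint_mem_orbitPoints {u : Kˣ} (z : K) : affinePoint q u z ∈ orbitPoints K q u :=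
  ⟨(1, z), by simp, rfl⟩

theorem pointAtInfinity_mem_orbitPoints {u : Kˣ} {y : K} (hy : y ≠ 0) :
    pointAtInfinity q u y ∈ orbitPoints K q u :=
  ⟨(0, y), by simp [hy], rfl⟩

section Orbits

variable {u : Kˣ} (hu : ∀ x : Kˣ, x ∈ Subgroup.zpowers u)
include hu

theorem gGroup_eq_range : gGroup q u = (gPermHom (K := K) q).range := by
  rw [MonoidHom.range_eq_map, ← (eq_top_iff.2 fun x _ => hu x : Subgroup.zpowers u = ⊤),
    MonoidHom.map_zpowers]
  rfl

theorem mem_orbit_gGroup_iff {s t : K × K} :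
    t ∈ MulAction.orbit (gGroup q u) s ↔
      ∃ v : Kˣ, t = ((v : K) * s.1, (v : K) ^ (q + 1) * s.2) := by
  rw [gGroup_eq_range hu, MulAction.mem_orbit_iff]
  constructor
  · rintro ⟨⟨_, v, rfl⟩, rfl⟩
    exact ⟨v, rfl⟩
  · rintro ⟨v, rfl⟩
    exact ⟨⟨gPermHom q v, v, rfl⟩, rfl⟩

theorem orbit_eq_affinePoint {x : K} (hx : x ≠ 0) (y : K) :
    MulAction.orbit (gGroup q u) (x, y) = affinePoint q u (y / x ^ (q + 1)) :=
  MulAction.orbit_eq_iff.2 ((mem_orbit_gGroup_iff hu).2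
    ⟨Units.mk0 x hx, by simp [mul_div_cancel₀ y (pow_ne_zero (q + 1) hx)]⟩)

theorem mem_orbitPoints_iff {O : Set (K × K)} :
    O ∈ orbitPoints K q u ↔
      (∃ z, O = affinePoint q u z) ∨ ∃ y ≠ 0, O = pointAtInfinity q u y := by
  constructor
  · rintro ⟨⟨x, y⟩, hs, rfl⟩
    rcases eq_or_ne x 0 with rfl | hx
    · exact Or.inr ⟨y, by simpa using hs, rfl⟩
    · exact Or.inl ⟨_, orbit_eq_affinePoint hu hx y⟩
  · rintro (⟨z, rfl⟩ | ⟨y, hy, rfl⟩)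
    exacts [affinePoint_mem_orbitPoints z, pointAtInfinity_mem_orbitPoints hy]

theorem affinePoint_injective : Function.Injective (affinePoint (K := K) q u) := by
  intro z z' h
  have h1 : ((1 : K), z') ∈ affinePoint q u z := by rw [h]; exact MulAction.mem_orbit_self _
  obtain ⟨v, hv⟩ := (mem_orbit_gGroup_iff hu).1 h1
  simp only [Prod.mk.injEq, mul_one] at hv
  rw [hv.2, ← hv.1, one_pow, one_mul]

theorem affinePoint_ne_pointAtInfinity (z y : K) : affinePoint q u z ≠ pointAtInfinity q u y := by
  intro h
  have h1 : ((1 : K), z) ∈ pointAtInfinity q u y := by rw [← h]; exact MulAction.mem_orbit_self _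
  obtain ⟨v, hv⟩ := (mem_orbit_gGroup_iff hu).1 h1
  simp at hv

end Orbits

def hermitianSet (q : ℕ) (b a : K) : Set (K × K) :=
  {s | s ≠ (0, 0) ∧ traceForm q b s.2 = a * s.1 ^ (q + 1)}

def hermitianLine (q : ℕ) (u : Kˣ) (b a : K) : Set (Set (K × K)) :=
  {O ∈ orbitPoints K q u | O ⊆ hermitianSet q b a}

variable (K) in
/-- The line `{x = 0}` of the statement is `hermitianLine q u 0 1`, the curve `S_b` gives
`hermitianLine q u b 1` and the cone of `c` gives `hermitianLine q u (c^q) 0`. -/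
def orbitLines (q : ℕ) (u : Kˣ) : Set (Set (Set (K × K))) :=
  {L | ∃ b a : K, (b ≠ 0 ∨ a ≠ 0) ∧ a ^ q = a ∧ L = hermitianLine q u b a}

theorem subset_orbitPoints_of_mem_orbitLines {u : Kˣ} {L : Set (Set (K × K))}
    (hL : L ∈ orbitLines K q u) : L ⊆ orbitPoints K q u := by
  obtain ⟨b, a, -, -, rfl⟩ := hL
  exact fun O hO => hO.1

theorem hermitianSet_mul {t : K} (ht0 : t ≠ 0) (ht : t ^ q = t) (b a : K) :
    hermitianSet q (t * b) (t * a) = hermitianSet q b a := by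
  ext s
  simp only [hermitianSet, Set.mem_ofPred_eq, traceForm_mul_left ht, mul_assoc,
    mul_right_inj' ht0]

theorem hermitianLine_mul {u : Kˣ} {t : K} (ht0 : t ≠ 0) (ht : t ^ q = t) (b a : K) :
    hermitianLine q u (t * b) (t * a) = hermitianLine q u b a := by
  simp only [hermitianLine, hermitianSet_mul ht0 ht]

theorem hermitianLine_zero_left {u : Kˣ} {t : K} (ht0 : t ≠ 0) (ht : t ^ q = t) :
    hermitianLine q u 0 t = hermitianLine q u 0 1 := by
  simpa using hermitianLine_mul (u := u) ht0 ht 0 1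

theorem hermitianSet_zero_one (hq : q ≠ 0) :
    hermitianSet q (0 : K) 1 = {s | s.1 = 0 ∧ s.2 ≠ 0} := by
  ext ⟨x, y⟩
  simp only [hermitianSet, Set.mem_ofPred_eq, traceForm_zero_left hq, one_mul,
    eq_comm (a := (0 : K)), pow_eq_zero_iff (Nat.succ_ne_zero q), ne_eq, Prod.mk.injEq]
  tauto

theorem hermitianSet_one (b : K) :
    hermitianSet q b 1 = {s | s ≠ (0, 0) ∧ s.1 ^ (q + 1) = b * s.2 ^ q + b ^ q * s.2} := by
  ext s
  simp [hermitianSet, traceForm, eq_comm]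

theorem hermitianSet_pow_zero [Fintype K] (hK : Fintype.card K = q ^ 2) (c : K) :
    hermitianSet q (c ^ q) 0 = {s | s ≠ (0, 0) ∧ c ^ q * s.2 ^ q + c * s.2 = 0} := by
  ext s
  simp [hermitianSet, traceForm, pow_pow_of_card_eq_sq hK]

theorem hermitianLine_eq_of_traceForm_eq_zero {u : Kˣ} (hq : q ≠ 0) {w b b' z a a' : K}
    (hba : b ≠ 0 ∨ a ≠ 0) (hba' : b' ≠ 0 ∨ a' ≠ 0) (hw : w ≠ 0)
    (hbw : traceForm q b w = 0) (hb'w : traceForm q b' w = 0)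
    (hbz : traceForm q b z = a) (hb'z : traceForm q b' z = a') :
    hermitianLine q u b a = hermitianLine q u b' a' := by
  have hb : b ≠ 0 := by
    rintro rfl
    exact hba.resolve_left (not_not_intro rfl) (by rw [← hbz, traceForm_zero_left hq])
  have hb' : b' ≠ 0 := by
    rintro rfl
    exact hba'.resolve_left (not_not_intro rfl) (by rw [← hb'z, traceForm_zero_left hq])
  rw [traceForm_comm] at hbw hb'w
  obtain ⟨t, ht, rfl⟩ := (traceForm_eq_zero_iff hw hb hbw b').1 hb'w
  rw [← hb'z, traceForm_mul_left ht, hbz, hermitianLine_mul (left_ne_zero_of_mul hb') ht]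

theorem mem_orbitLines_iff [Fintype K] (hK : Fintype.card K = q ^ 2) {u : Kˣ}
    {L : Set (Set (K × K))} :
    L ∈ orbitLines K q u ↔
      L = {O ∈ orbitPoints K q u | O ⊆ {s : K × K | s.1 = 0 ∧ s.2 ≠ 0}} ∨
      (∃ b : K, b ≠ 0 ∧ L = {O ∈ orbitPoints K q u | O ⊆ {s : K × K |
          s ≠ (0, 0) ∧ s.1 ^ (q + 1) = b * s.2 ^ q + b ^ q * s.2}}) ∨
      (∃ c : K, c ≠ 0 ∧ L = {O ∈ orbitPoints K q u | O ⊆ {s : K × K |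
          s ≠ (0, 0) ∧ c ^ q * s.2 ^ q + c * s.2 = 0}}) := by
  have hq : q ≠ 0 := (one_lt_of_card_eq_sq hK).ne_bot
  simp only [← hermitianSet_zero_one hq, ← hermitianSet_one, ← hermitianSet_pow_zero hK]
  change _ ↔ L = hermitianLine q u 0 1 ∨ (∃ b, b ≠ 0 ∧ L = hermitianLine q u b 1) ∨
    ∃ c, c ≠ 0 ∧ L = hermitianLine q u (c ^ q) 0
  constructor
  · rintro ⟨b, a, hba, ha, rfl⟩
    rcases eq_or_ne a 0 with rfl | ha0
    · exact Or.inr (Or.inr ⟨b ^ q, pow_ne_zero _ (hba.resolve_right (not_not_intro rfl)),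
        by rw [pow_pow_of_card_eq_sq hK]⟩)
    · have h := hermitianLine_mul (u := u) ha0 ha (a⁻¹ * b) 1
      rw [mul_inv_cancel_left₀ ha0, mul_one] at h
      rw [h]
      rcases eq_or_ne b 0 with rfl | hb
      · exact Or.inl (by rw [mul_zero])
      · exact Or.inr (Or.inl ⟨a⁻¹ * b, mul_ne_zero (inv_ne_zero ha0) hb, rfl⟩)
  · rintro (rfl | ⟨b, hb, rfl⟩ | ⟨c, hc, rfl⟩)
    · exact ⟨0, 1, Or.inr one_ne_zero, one_pow q, rfl⟩
    · exact ⟨b, 1, Or.inl hb, one_pow q, rfl⟩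
    · exact ⟨c ^ q, 0, Or.inl (pow_ne_zero q hc), zero_pow hq, rfl⟩

section Incidence

variable [Fintype K] {u : Kˣ} (hK : Fintype.card K = q ^ 2)
  (hu : ∀ x : Kˣ, x ∈ Subgroup.zpowers u)
include hK hu

theorem pointAtInfinity_mul {t : K} (ht0 : t ≠ 0) (ht : t ^ q = t) (y : K) :
    pointAtInfinity q u (t * y) = pointAtInfinity q u y := by
  obtain ⟨v, hv⟩ := exists_pow_succ_eq hK hu ht0 ht
  exact MulAction.orbit_eq_iff.2 ((mem_orbit_gGroup_iff hu).2 ⟨v, by simp [hv]⟩)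

theorem orbit_subset_hermitianSet_iff {s : K × K} (hs : s ≠ (0, 0)) (b a : K) :
    MulAction.orbit (gGroup q u) s ⊆ hermitianSet q b a ↔
      traceForm q b s.2 = a * s.1 ^ (q + 1) := by
  refine ⟨fun h => (h (MulAction.mem_orbit_self s)).2, fun h t ht => ?_⟩
  obtain ⟨v, rfl⟩ := (mem_orbit_gGroup_iff hu).1 ht
  refine ⟨?_, ?_⟩
  · obtain ⟨x, y⟩ := s
    simpa using hs
  · rw [traceForm_mul_right (pow_succ_pow_of_card_eq_sq hK _), h, mul_pow]
    ring

theorem affinePoint_mem_hermitianLine_iff (z b a : K) :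
    affinePoint q u z ∈ hermitianLine q u b a ↔ traceForm q b z = a := by
  have h := orbit_subset_hermitianSet_iff hK hu (s := ((1 : K), z)) (by simp) b a
  simp only [one_pow, mul_one] at h
  exact ⟨fun hz => h.1 hz.2, fun hz => ⟨affinePoint_mem_orbitPoints z, h.2 hz⟩⟩

theorem pointAtInfinity_mem_hermitianLine_iff {y : K} (hy : y ≠ 0) (b a : K) :
    pointAtInfinity q u y ∈ hermitianLine q u b a ↔ traceForm q b y = 0 := by
  have h := orbit_subset_hermitianSet_iff hK hu (s := ((0 : K), y)) (by simp [hy]) b a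
  simp only [zero_pow (Nat.succ_ne_zero q), mul_zero] at h
  exact ⟨fun hy => h.1 hy.2, fun hy' => ⟨pointAtInfinity_mem_orbitPoints hy, h.2 hy'⟩⟩

theorem eq_zero_of_traceForm_pointAtInfinity_eq_zero {y y' c : K} (hy : y ≠ 0) (hy' : y' ≠ 0)
    (hne : pointAtInfinity q u y ≠ pointAtInfinity q u y') (hc : traceForm q c y = 0)
    (hc' : traceForm q c y' = 0) : c = 0 := by
  by_contra hc0
  obtain ⟨t, ht, rfl⟩ := (traceForm_eq_zero_iff hc0 hy hc y').1 hc'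
  exact hne (pointAtInfinity_mul hK hu (left_ne_zero_of_mul hy') ht y).symm

theorem exists_common_point {L L' : Set (Set (K × K))} (hL : L ∈ orbitLines K q u)
    (hL' : L' ∈ orbitLines K q u) : ∃ O ∈ orbitPoints K q u, O ∈ L ∧ O ∈ L' := by
  obtain ⟨b, a, -, ha, rfl⟩ := hL
  obtain ⟨b', a', -, ha', rfl⟩ := hL'
  rcases exists_traceForm_eq_and_eq_or hK hu ha ha' with ⟨z, hz, hz'⟩ | ⟨y, hy, hby, hb'y⟩
  · exact ⟨_, affinePoint_mem_orbitPoints z, (affinePoint_mem_hermitianLine_iff hK hu z b a).2 hz,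
      (affinePoint_mem_hermitianLine_iff hK hu z b' a').2 hz'⟩
  · exact ⟨_, pointAtInfinity_mem_orbitPoints hy,
      (pointAtInfinity_mem_hermitianLine_iff hK hu hy b a).2 hby,
      (pointAtInfinity_mem_hermitianLine_iff hK hu hy b' a').2 hb'y⟩

theorem exists_common_line_affinePoint (z : K) {O : Set (K × K)} (hO : O ∈ orbitPoints K q u) :
    ∃ L ∈ orbitLines K q u, affinePoint q u z ∈ L ∧ O ∈ L := by
  have hline {d : K} (hd : d ≠ 0) : hermitianLine q u d (traceForm q d z) ∈ orbitLines K q u :=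
    ⟨_, _, Or.inl hd, traceForm_pow hK d z, rfl⟩
  have hz (d : K) : affinePoint q u z ∈ hermitianLine q u d (traceForm q d z) :=
    (affinePoint_mem_hermitianLine_iff hK hu z _ _).2 rfl
  rcases (mem_orbitPoints_iff hu).1 hO with ⟨z', rfl⟩ | ⟨y, hy, rfl⟩
  · obtain ⟨d, hd, hdw⟩ := exists_traceForm_eq_zero hK hu (z - z')
    rw [traceForm_comm, traceForm_sub_right hK, sub_eq_zero] at hdw
    exact ⟨_, hline hd, hz d, (affinePoint_mem_hermitianLine_iff hK hu _ _ _).2 hdw.symm⟩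
  · obtain ⟨d, hd, hdy⟩ := exists_traceForm_eq_zero hK hu y
    rw [traceForm_comm] at hdy
    exact ⟨_, hline hd, hz d, (pointAtInfinity_mem_hermitianLine_iff hK hu hy _ _).2 hdy⟩

theorem exists_common_line {O O' : Set (K × K)} (hO : O ∈ orbitPoints K q u)
    (hO' : O' ∈ orbitPoints K q u) : ∃ L ∈ orbitLines K q u, O ∈ L ∧ O' ∈ L := by
  have hq : q ≠ 0 := (one_lt_of_card_eq_sq hK).ne_bot
  rcases (mem_orbitPoints_iff hu).1 hO with ⟨z, rfl⟩ | ⟨y, hy, rfl⟩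
  · exact exists_common_line_affinePoint hK hu z hO'
  rcases (mem_orbitPoints_iff hu).1 hO' with ⟨z, rfl⟩ | ⟨y', hy', rfl⟩
  · obtain ⟨L, hL, hzL, hyL⟩ := exists_common_line_affinePoint hK hu z hO
    exact ⟨L, hL, hyL, hzL⟩
  · refine ⟨_, ⟨0, 1, Or.inr one_ne_zero, one_pow q, rfl⟩, ?_, ?_⟩
    · exact (pointAtInfinity_mem_hermitianLine_iff hK hu hy _ _).2 (traceForm_zero_left hq y)
    · exact (pointAtInfinity_mem_hermitianLine_iff hK hu hy' _ _).2 (traceForm_zero_left hq y')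

theorem eq_or_eq_of_mem_orbitLines {O O' : Set (K × K)} {L L' : Set (Set (K × K))}
    (hO : O ∈ orbitPoints K q u) (hO' : O' ∈ orbitPoints K q u) (hL : L ∈ orbitLines K q u)
    (hL' : L' ∈ orbitLines K q u) (hOL : O ∈ L) (hO'L : O' ∈ L) (hOL' : O ∈ L')
    (hO'L' : O' ∈ L') : O = O' ∨ L = L' := by
  have hq : q ≠ 0 := (one_lt_of_card_eq_sq hK).ne_bot
  rcases eq_or_ne O O' with h | hne
  · exact Or.inl h
  right
  obtain ⟨b, a, hba, ha, rfl⟩ := hL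
  obtain ⟨b', a', hba', ha', rfl⟩ := hL'
  rcases (mem_orbitPoints_iff hu).1 hO with ⟨z, rfl⟩ | ⟨y, hy, rfl⟩ <;>
    rcases (mem_orbitPoints_iff hu).1 hO' with ⟨z', rfl⟩ | ⟨y', hy', rfl⟩
  · simp only [affinePoint_mem_hermitianLine_iff hK hu] at hOL hO'L hOL' hO'L'
    have hzz' : z - z' ≠ 0 := sub_ne_zero.2 fun h => hne (h ▸ rfl)
    refine hermitianLine_eq_of_traceForm_eq_zero hq hba hba' hzz' ?_ ?_ hOL hOL'
    · rw [traceForm_sub_right hK, hOL, hO'L, sub_self]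
    · rw [traceForm_sub_right hK, hOL', hO'L', sub_self]
  · rw [affinePoint_mem_hermitianLine_iff hK hu] at hOL hOL'
    rw [pointAtInfinity_mem_hermitianLine_iff hK hu hy'] at hO'L hO'L'
    exact hermitianLine_eq_of_traceForm_eq_zero hq hba hba' hy' hO'L hO'L' hOL hOL'
  · rw [pointAtInfinity_mem_hermitianLine_iff hK hu hy] at hOL hOL'
    rw [affinePoint_mem_hermitianLine_iff hK hu] at hO'L hO'L'
    exact hermitianLine_eq_of_traceForm_eq_zero hq hba hba' hy hOL hOL' hO'L hO'L'
  · simp only [pointAtInfinity_mem_hermitianLine_iff hK hu hy,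
      pointAtInfinity_mem_hermitianLine_iff hK hu hy'] at hOL hO'L hOL' hO'L'
    obtain rfl := eq_zero_of_traceForm_pointAtInfinity_eq_zero hK hu hy hy' hne hOL hO'L
    obtain rfl := eq_zero_of_traceForm_pointAtInfinity_eq_zero hK hu hy hy' hne hOL' hO'L'
    rw [hermitianLine_zero_left (hba.resolve_left (not_not_intro rfl)) ha,
      hermitianLine_zero_left (hba'.resolve_left (not_not_intro rfl)) ha']

theorem exists_not_mem_of_mem_orbitLines {L : Set (Set (K × K))} (hL : L ∈ orbitLines K q u) :
    ∃ O ∈ orbitPoints K q u, O ∉ L := by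
  have hq : q ≠ 0 := (one_lt_of_card_eq_sq hK).ne_bot
  obtain ⟨b, a, hba, -, rfl⟩ := hL
  rcases eq_or_ne b 0 with rfl | hb
  · refine ⟨_, affinePoint_mem_orbitPoints 0, ?_⟩
    rw [affinePoint_mem_hermitianLine_iff hK hu, traceForm_zero_left hq]
    exact (hba.resolve_left (not_not_intro rfl)).symm
  · obtain ⟨y, hy⟩ := exists_traceForm_ne_zero hK hu hb
    have hy0 : y ≠ 0 := by
      rintro rfl
      exact hy (traceForm_zero_right hq b)
    exact ⟨_, pointAtInfinity_mem_orbitPoints hy0,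
      by rwa [pointAtInfinity_mem_hermitianLine_iff hK hu hy0]⟩

theorem exists_orbitLines_not_mem {O : Set (K × K)} (hO : O ∈ orbitPoints K q u) :
    ∃ L ∈ orbitLines K q u, O ∉ L := by
  have hq : q ≠ 0 := (one_lt_of_card_eq_sq hK).ne_bot
  rcases (mem_orbitPoints_iff hu).1 hO with ⟨z, rfl⟩ | ⟨y, hy, rfl⟩
  · refine ⟨_, ⟨0, 1, Or.inr one_ne_zero, one_pow q, rfl⟩, ?_⟩
    rw [affinePoint_mem_hermitianLine_iff hK hu, traceForm_zero_left hq]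
    exact zero_ne_one
  · obtain ⟨b, hb⟩ := exists_traceForm_ne_zero hK hu hy
    have hb0 : b ≠ 0 := by
      rintro rfl
      exact hb (traceForm_zero_right hq y)
    refine ⟨_, ⟨b, 0, Or.inl hb0, zero_pow hq, rfl⟩, ?_⟩
    rwa [pointAtInfinity_mem_hermitianLine_iff hK hu hy, traceForm_comm]

theorem ncard_hermitianLine {e : K} (he : e ≠ 0) (he1 : traceForm q e 1 = 0) :
    (hermitianLine q u e 0).ncard = q + 1 := by
  have hline : hermitianLine q u e 0 =
      insert (pointAtInfinity q u 1) (affinePoint q u '' {t | t ^ q = t}) := by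
    ext O
    constructor
    · intro hO
      rcases (mem_orbitPoints_iff hu).1 hO.1 with ⟨z, rfl⟩ | ⟨y, hy, rfl⟩
      · rw [affinePoint_mem_hermitianLine_iff hK hu,
          traceForm_eq_zero_iff he one_ne_zero he1] at hO
        obtain ⟨t, ht, rfl⟩ := hO
        exact Or.inr ⟨t, ht, by rw [mul_one]⟩
      · rw [pointAtInfinity_mem_hermitianLine_iff hK hu hy,
          traceForm_eq_zero_iff he one_ne_zero he1] at hO
        obtain ⟨t, ht, rfl⟩ := hO
        exact Or.inl (pointAtInfinity_mul hK hu (left_ne_zero_of_mul hy) ht 1)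
    · rintro (rfl | ⟨t, ht, rfl⟩)
      · exact (pointAtInfinity_mem_hermitianLine_iff hK hu one_ne_zero e 0).2 he1
      · refine (affinePoint_mem_hermitianLine_iff hK hu t e 0).2 ?_
        rw [← mul_one t, traceForm_mul_right ht, he1, mul_zero]
  rw [hline, Set.ncard_insert_of_notMem, Set.ncard_image_of_injective _ (affinePoint_injective hu),
    ncard_pow_eq_self hK hu]
  rintro ⟨z, -, h⟩
  exact affinePoint_ne_pointAtInfinity hu z 1 h

end Incidence

instance {u : Kˣ} : Membership (orbitPoints K q u) (orbitLines K q u) :=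
  ⟨fun L O => O.1 ∈ L.1⟩

theorem mem_iff {u : Kˣ} {O : orbitPoints K q u} {L : orbitLines K q u} : O ∈ L ↔ O.1 ∈ L.1 :=
  Iff.rfl

theorem pointCount_eq_ncard {u : Kˣ} (L : orbitLines K q u) :
    Configuration.pointCount (orbitPoints K q u) L = L.1.ncard :=
  (Nat.card_congr (Equiv.subtypeSubtypeEquivSubtype
    fun hO => subset_orbitPoints_of_mem_orbitLines L.2 hO)).trans (Nat.card_coe_set_eq _)

section Plane

variable [Fintype K] {u : Kˣ} (hK : Fintype.card K = q ^ 2)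
  (hu : ∀ x : Kˣ, x ∈ Subgroup.zpowers u)

noncomputable abbrev projectivePlane :
    Configuration.ProjectivePlane (orbitPoints K q u) (orbitLines K q u) where
  exists_point L :=
    let ⟨O, hO, hOL⟩ := exists_not_mem_of_mem_orbitLines hK hu L.2
    ⟨⟨O, hO⟩, hOL⟩
  exists_line O :=
    let ⟨L, hL, hOL⟩ := exists_orbitLines_not_mem hK hu O.2
    ⟨⟨L, hL⟩, hOL⟩
  eq_or_eq {O O' L L'} hOL hO'L hOL' hO'L' :=
    (eq_or_eq_of_mem_orbitLines hK hu O.2 O'.2 L.2 L'.2 hOL hO'L hOL' hO'L').imp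
      Subtype.ext Subtype.ext
  mkPoint {L L'} _ :=
    ⟨(exists_common_point hK hu L.2 L'.2).choose,
      (exists_common_point hK hu L.2 L'.2).choose_spec.1⟩
  mkPoint_ax {L L'} _ := (exists_common_point hK hu L.2 L'.2).choose_spec.2
  mkLine {O O'} _ :=
    ⟨(exists_common_line hK hu O.2 O'.2).choose,
      (exists_common_line hK hu O.2 O'.2).choose_spec.1⟩
  mkLine_ax {O O'} _ := (exists_common_line hK hu O.2 O'.2).choose_spec.2
  exists_config := by
    have hq : q ≠ 0 := (one_lt_of_card_eq_sq hK).ne_bot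
    obtain ⟨e, he, he1⟩ := exists_traceForm_eq_zero hK hu 1
    obtain ⟨y, hy⟩ := exists_traceForm_ne_zero hK hu one_ne_zero
    obtain ⟨b, hb⟩ := exists_traceForm_ne_zero hK hu he
    have hy0 : y ≠ 0 := by
      rintro rfl
      exact hy (traceForm_zero_right hq 1)
    have hb0 : b ≠ 0 := by
      rintro rfl
      exact hb (traceForm_zero_right hq e)
    rw [traceForm_comm] at hb
    refine ⟨⟨_, pointAtInfinity_mem_orbitPoints hy0⟩, ⟨_, pointAtInfinity_mem_orbitPoints he⟩,
      ⟨_, affinePoint_mem_orbitPoints 0⟩, ⟨_, b, 1, Or.inl hb0, one_pow q, rfl⟩,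
      ⟨_, 1, 0, Or.inl one_ne_zero, zero_pow hq, rfl⟩,
      ⟨_, 1, 1, Or.inl one_ne_zero, one_pow q, rfl⟩, ?_⟩
    simp only [mem_iff, pointAtInfinity_mem_hermitianLine_iff hK hu hy0,
      pointAtInfinity_mem_hermitianLine_iff hK hu he, affinePoint_mem_hermitianLine_iff hK hu,
      traceForm_zero_right hq]
    exact ⟨hy, hy, hb, he1, he1, zero_ne_one, trivial, zero_ne_one⟩

theorem order_projectivePlane :
    letI := projectivePlane hK hu
    Configuration.ProjectivePlane.order (orbitPoints K q u) (orbitLines K q u) = q := by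
  let _ := projectivePlane hK hu
  obtain ⟨e, he, he1⟩ := exists_traceForm_eq_zero hK hu 1
  rw [traceForm_comm] at he1
  have hL : hermitianLine q u e 0 ∈ orbitLines K q u :=
    ⟨e, 0, Or.inl he, zero_pow (one_lt_of_card_eq_sq hK).ne_bot, rfl⟩
  have h := Configuration.ProjectivePlane.pointCount_eq (orbitPoints K q u)
    (⟨_, hL⟩ : orbitLines K q u)
  rw [pointCount_eq_ncard, ncard_hermitianLine hK hu he he1] at h
  exact Nat.add_right_cancel h.symm

end Plane

end HermitianPlane

theorem orbit_incidence_structure_is_projective_plane_general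
    (q : ℕ)
    (K : Type*) [Field K] [Fintype K] (hK : Fintype.card K = q ^ 2)
    (u : Kˣ) (hu : ∀ x : Kˣ, x ∈ Subgroup.zpowers u) :
    ∀ Ω : Set (Set (K × K)), ∀ Lins : Set (Set (Set (K × K))),
      Ω = {O : Set (K × K) | ∃ s : K × K, s ≠ (0, 0) ∧ O = MulAction.orbit (gGroup q u) s} →
      Lins = {L : Set (Set (K × K)) |
          L = {O ∈ Ω | O ⊆ {s : K × K | s.1 = 0 ∧ s.2 ≠ 0}} ∨
          (∃ b : K, b ≠ 0 ∧
            L = {O ∈ Ω | O ⊆ {s : K × K |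
              s ≠ (0, 0) ∧ s.1 ^ (q + 1) = b * s.2 ^ q + b ^ q * s.2}}) ∨
          (∃ c : K, c ≠ 0 ∧
            L = {O ∈ Ω | O ⊆ {s : K × K |
              s ≠ (0, 0) ∧ c ^ q * s.2 ^ q + c * s.2 = 0}})} →
      Ω.ncard = q ^ 2 + q + 1 ∧
      Lins.ncard = q ^ 2 + q + 1 ∧
      (∀ L ∈ Lins, L.ncard = q + 1) ∧
      (∀ L ∈ Lins, ∀ L' ∈ Lins, L ≠ L' → ∃! O : Set (K × K), O ∈ L ∧ O ∈ L') ∧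
      (∀ O ∈ Ω, ∀ O' ∈ Ω, O ≠ O' →
        ∃! L : Set (Set (K × K)), L ∈ Lins ∧ O ∈ L ∧ O' ∈ L) := by
  intro Ω Lins hΩ hLins
  obtain rfl : Ω = HermitianPlane.orbitPoints K q u := hΩ
  obtain rfl : Lins = HermitianPlane.orbitLines K q u :=
    hLins.trans (Set.ext fun L => (HermitianPlane.mem_orbitLines_iff hK).symm)
  let _ := HermitianPlane.projectivePlane hK hu
  have hord := HermitianPlane.order_projectivePlane hK hu
  refine ⟨?_, ?_, fun L hL => ?_, fun L hL L' hL' hne => ?_, fun O hO O' hO' hne => ?_⟩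
  · rw [← Nat.card_coe_set_eq, Configuration.ProjectivePlane.natCard_points
      (L := HermitianPlane.orbitLines K q u), hord]
  · rw [← Nat.card_coe_set_eq, Configuration.ProjectivePlane.natCard_lines
      (P := HermitianPlane.orbitPoints K q u), hord]
  · rw [← HermitianPlane.pointCount_eq_ncard ⟨L, hL⟩,
      Configuration.ProjectivePlane.pointCount_eq, hord]
  · obtain ⟨O, hOL, hO⟩ := Configuration.HasPoints.existsUnique_point _ _ ⟨L, hL⟩ ⟨L', hL'⟩
      fun h => hne (congrArg Subtype.val h)
    exact ⟨O, hOL, fun O' hO' => congrArg Subtype.val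
      (hO ⟨O', HermitianPlane.subset_orbitPoints_of_mem_orbitLines hL hO'.1⟩ hO')⟩
  · obtain ⟨L, hOL, hL⟩ := Configuration.HasLines.existsUnique_line _
      (HermitianPlane.orbitLines K q u) ⟨O, hO⟩ ⟨O', hO'⟩
      fun h => hne (congrArg Subtype.val h)
    exact ⟨L, ⟨L.2, hOL⟩, fun L' hL' => congrArg Subtype.val (hL ⟨L', hL'.1⟩ hL'.2)⟩

/-- The incidence structure whose points are the orbits of `G = ⟨(x,y) ↦ (λx, λ^{q+1}y)⟩` on
`(K × K) \ {0}` and whose lines are (i) the orbits on the punctured line `x = 0`, (ii) for each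
`b ∈ K*` the orbits contained in the punctured affine Hermitian curve `S_b`, and (iii) for each
coset of `F_q*` in `K*` the orbits contained in the corresponding affine Hermitian cone, is a
projective plane of order `q`. -/
theorem orbit_incidence_structure_is_projective_plane
    (q : ℕ) (hq : IsPrimePow q) (hq2 : 2 < q)
    (K : Type*) [Field K] [Fintype K] (hK : Fintype.card K = q ^ 2)
    (u : Kˣ) (hu : ∀ x : Kˣ, x ∈ Subgroup.zpowers u) :
    ∀ Ω : Set (Set (K × K)), ∀ Lins : Set (Set (Set (K × K))),
      Ω = {O : Set (K × K) | ∃ s : K × K, s ≠ (0, 0) ∧ O = MulAction.orbit (gGroup q u) s} →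
      Lins = {L : Set (Set (K × K)) |
          L = {O ∈ Ω | O ⊆ {s : K × K | s.1 = 0 ∧ s.2 ≠ 0}} ∨
          (∃ b : K, b ≠ 0 ∧
            L = {O ∈ Ω | O ⊆ {s : K × K |
              s ≠ (0, 0) ∧ s.1 ^ (q + 1) = b * s.2 ^ q + b ^ q * s.2}}) ∨
          (∃ c : K, c ≠ 0 ∧
            L = {O ∈ Ω | O ⊆ {s : K × K |
              s ≠ (0, 0) ∧ c ^ q * s.2 ^ q + c * s.2 = 0}})} →
      Ω.ncard = q ^ 2 + q + 1 ∧
      Lins.ncard = q ^ 2 + q + 1 ∧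
      (∀ L ∈ Lins, L.ncard = q + 1) ∧
      (∀ L ∈ Lins, ∀ L' ∈ Lins, L ≠ L' → ∃! O : Set (K × K), O ∈ L ∧ O ∈ L') ∧
      (∀ O ∈ Ω, ∀ O' ∈ Ω, O ≠ O' →
        ∃! L : Set (Set (K × K)), L ∈ Lins ∧ O ∈ L ∧ O' ∈ L) :=
  orbit_incidence_structure_is_projective_plane_general q K hK u hu
end

section
/- Let Π be a finite projective plane of order n. If B is a set of exactly n + 1 points of Π such that every line of Π contains at least one point of B, then B is the set of points of some line of Π. -/
/-!
Take two points `b₁ ≠ b₂` of `B` and the line `l` through them. If some point `q` of `l` were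
outside `B`, then joining `q` to the points of `B` would map the `n + 1` points of `B` onto the
`n + 1` lines through `q` (every such line meets `B`), hence bijectively; but `b₁` and `b₂` both
go to `l`. So `l ⊆ B`, and both sets have `n + 1` points.
-/

open Configuration

namespace Configuration

variable {P L : Type*} [Membership P L]

theorem HasLines.eq_of_mem_of_ncard_le_lineCount [HasLines P L] [Finite P] {B : Set P} {q : P}
    (hqB : q ∉ B) (hblock : ∀ m : L, q ∈ m → ∃ p ∈ B, p ∈ m) (hB : B.ncard ≤ lineCount L q)
    {m : L} (hqm : q ∈ m) {b₁ b₂ : P} (hb₁ : b₁ ∈ B) (hb₂ : b₂ ∈ B) (hb₁m : b₁ ∈ m)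
    (hb₂m : b₂ ∈ m) : b₁ = b₂ := by
  have hne (b : B) : (b : P) ≠ q := fun h => hqB (h ▸ b.2)
  let f : B → {m : L // q ∈ m} := fun b => ⟨mkLine (hne b), (mkLine_ax (hne b)).2⟩
  have hf (b : B) (m : L) (hqm : q ∈ m) (hbm : (b : P) ∈ m) : f b = ⟨m, hqm⟩ :=
    Subtype.ext <| (Nondegenerate.eq_or_eq (mkLine_ax (hne b)).1 (mkLine_ax (hne b)).2
      hbm hqm).resolve_left (hne b)
  have hsurj : f.Surjective := by
    rintro ⟨m, hqm⟩
    obtain ⟨b, hb, hbm⟩ := hblock m hqm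
    exact ⟨⟨b, hb⟩, hf ⟨b, hb⟩ m hqm hbm⟩
  have hcard : Nat.card B = lineCount L q :=
    le_antisymm (by rwa [Nat.card_coe_set_eq]) (Nat.card_le_card_of_surjective f hsurj)
  have hinj : f.Injective := ((Nat.bijective_iff_surjective_and_card f).2 ⟨hsurj, hcard⟩).1
  exact congrArg Subtype.val <|
    hinj ((hf ⟨b₁, hb₁⟩ m hqm hb₁m).trans (hf ⟨b₂, hb₂⟩ m hqm hb₂m).symm)

namespace ProjectivePlane

variable [ProjectivePlane P L] [Finite P] [Finite L]

theorem ncard_setOf_mem (l : L) : {p : P | p ∈ l}.ncard = order P L + 1 := by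
  rw [← Nat.card_coe_set_eq]
  exact pointCount_eq P l

theorem setOf_mem_subset_of_blocking {B : Set P} (hB : B.ncard = order P L + 1)
    (hblock : ∀ l : L, ∃ p ∈ B, p ∈ l) {l : L} {b₁ b₂ : P} (hb₁ : b₁ ∈ B) (hb₂ : b₂ ∈ B)
    (hne : b₁ ≠ b₂) (hb₁l : b₁ ∈ l) (hb₂l : b₂ ∈ l) : {p : P | p ∈ l} ⊆ B := by
  intro q hql
  by_contra hqB
  exact hne <| HasLines.eq_of_mem_of_ncard_le_lineCount hqB (fun m _ => hblock m)
    (hB.trans (lineCount_eq L q).symm).le hql hb₁ hb₂ hb₁l hb₂l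

end ProjectivePlane

end Configuration

/-- In a finite projective plane of order `n`, a blocking set with exactly `n + 1` points is
a line. -/
theorem blocking_set_card_order_add_one_is_line
    (P L : Type*) [Membership P L] [ProjectivePlane P L] [Finite P] [Finite L]
    (B : Set P) (hB : B.ncard = ProjectivePlane.order P L + 1)
    (hblock : ∀ l : L, ∃ p ∈ B, p ∈ l) :
    ∃ l : L, B = {p : P | p ∈ l} := by
  have htwo : 1 < B.ncard := by
    have := ProjectivePlane.one_lt_order P L
    omega
  obtain ⟨b₁, b₂, hb₁, hb₂, hne⟩ := (Set.one_lt_ncard_iff B.toFinite).mp htwo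
  obtain ⟨hb₁l, hb₂l⟩ := HasLines.mkLine_ax (L := L) hne
  have hsub := ProjectivePlane.setOf_mem_subset_of_blocking hB hblock hb₁ hb₂ hne hb₁l hb₂l
  refine ⟨HasLines.mkLine hne, (Set.eq_of_subset_of_ncard_le hsub ?_ B.toFinite).symm⟩
  rw [hB, ProjectivePlane.ncard_setOf_mem]
end

section
/- Let Π be a finite projective plane of order n and let w be a function from the points of Π to the natural numbers such that: (i) the total weight Σ_P w(P) equals 2n + 2; (ii) the support {P : w(P) > 0} has at most n + 1 points; and (iii) for every line ℓ of Π, Σ_{P ∈ ℓ} w(P) ≥ 2 (w is a 2-fold blocking multiset). Then there is a line ℓ of Π such that w(P) = 2 for every point P on ℓ and w(P) = 0 for every point P not on ℓ. -/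
/-!
The support `S` of `w` meets every line. For a point `p ∉ S`, the `n + 1` lines through `p`
partition `S` and each of them meets it; as `#S ≤ n + 1`, each meets `S` exactly once. So a line
through two points of `S` lies inside `S`, and comparing sizes, `S` is a line `ℓ`. Any other
line through `p ∈ ℓ` meets `S` only in `p`, whence `w p ≥ 2`; the total weight `2 (n + 1)` then
forces `w p = 2`.
-/

open Configuration Finset

namespace Configuration

section HasLines

variable {P L : Type*} [Membership P L] [HasLines P L] [Fintype L]

theorem HasLines.card_filter_mem_and_mem [∀ p q : P, DecidablePred fun l : L => p ∈ l ∧ q ∈ l]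
    {p q : P} (hpq : p ≠ q) : #{l : L | p ∈ l ∧ q ∈ l} = 1 := by
  obtain ⟨l, hl, hunique⟩ := HasLines.existsUnique_line P L p q hpq
  exact card_eq_one.mpr ⟨l, by ext m; simpa using ⟨hunique m, fun h => h ▸ hl⟩⟩

/-- Every point of `S` lies on exactly one line through a point `p ∉ S`. -/
theorem HasLines.sum_card_filter_mem_of_notMem [∀ l : L, DecidablePred (· ∈ l)]
    [∀ p : P, DecidablePred fun l : L => p ∈ l] {S : Finset P} {p : P} (hp : p ∉ S) :
    ∑ l : L with p ∈ l, #{q ∈ S | q ∈ l} = #S := by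
  classical
  simp_rw [card_filter]
  rw [sum_comm, card_eq_sum_ones]
  refine sum_congr rfl fun q hq => ?_
  rw [← card_filter, filter_filter]
  exact card_filter_mem_and_mem (L := L) (ne_of_mem_of_not_mem hq hp).symm

end HasLines

namespace ProjectivePlane

variable {P L : Type*} [Membership P L] [ProjectivePlane P L] [Fintype P] [Fintype L]

theorem card_filter_points_on [∀ l : L, DecidablePred (· ∈ l)] (l : L) :
    #{p : P | p ∈ l} = order P L + 1 := by
  rw [← pointCount_eq P l, pointCount, Nat.card_eq_fintype_card, Fintype.card_subtype]

theorem card_filter_lines_through [∀ p : P, DecidablePred fun l : L => p ∈ l] (p : P) :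
    #{l : L | p ∈ l} = order P L + 1 := by
  rw [← lineCount_eq L p, lineCount, Nat.card_eq_fintype_card, Fintype.card_subtype]

variable [∀ l : L, DecidablePred (· ∈ l)] {S : Finset P}

theorem mem_of_two_mem_of_blocking (hS : ∀ l : L, ∃ q ∈ S, q ∈ l)
    (hcard : #S ≤ order P L + 1) {l : L} {a b : P} (hab : a ≠ b) (ha : a ∈ S) (hb : b ∈ S)
    (hal : a ∈ l) (hbl : b ∈ l) {p : P} (hpl : p ∈ l) : p ∈ S := by
  classical
  by_contra hp
  have hlt : ∑ m : L with p ∈ m, 1 < ∑ m : L with p ∈ m, #{q ∈ S | q ∈ m} := by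
    refine sum_lt_sum (fun m _ => ?_) ⟨l, by simpa using hpl, ?_⟩
    · obtain ⟨q, hqS, hqm⟩ := hS m
      exact card_pos.mpr ⟨q, mem_filter.mpr ⟨hqS, hqm⟩⟩
    · exact one_lt_card.mpr ⟨a, by simpa using ⟨ha, hal⟩, b, by simpa using ⟨hb, hbl⟩, hab⟩
  rw [HasLines.sum_card_filter_mem_of_notMem hp, sum_const, card_filter_lines_through,
    smul_eq_mul, mul_one] at hlt
  omega

theorem exists_filter_mem_eq_of_blocking (hS : ∀ l : L, ∃ q ∈ S, q ∈ l)
    (hcard : #S ≤ order P L + 1) : ∃ l : L, ({p | p ∈ l} : Finset P) = S := by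
  obtain ⟨-, -, -, l₀, -⟩ := exists_config (P := P) (L := L)
  obtain ⟨a, haS, -⟩ := hS l₀
  obtain ⟨l₁, hal₁⟩ := Nondegenerate.exists_line (L := L) a
  obtain ⟨b, hbS, hbl₁⟩ := hS l₁
  have hab : a ≠ b := fun h => hal₁ (h ▸ hbl₁)
  obtain ⟨hal, hbl⟩ := HasLines.mkLine_ax (L := L) hab
  refine ⟨HasLines.mkLine hab, eq_of_subset_of_card_le (fun p hp => ?_) ?_⟩
  · exact mem_of_two_mem_of_blocking hS hcard hab haS hbS hal hbl (mem_filter.mp hp).2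
  · rwa [card_filter_points_on]

end ProjectivePlane

section Weights

variable {P L M : Type*} [Membership P L] [Fintype P] [∀ l : L, DecidablePred (· ∈ l)]
  [AddCommMonoid M] {w : P → M} {ℓ : L}

theorem sum_filter_mem_eq_of_eq_zero_of_notMem [Nondegenerate P L]
    (hw : ∀ q : P, q ∉ ℓ → w q = 0) {m : L} (hm : m ≠ ℓ) {p : P} (hpℓ : p ∈ ℓ) (hpm : p ∈ m) : ∑ q : P with q ∈ m, w q = w p := by
  refine sum_eq_single_of_mem p (by simpa using hpm) fun q hq hqp => hw q fun hqℓ => hm ?_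
  exact ((Nondegenerate.eq_or_eq hqℓ hpℓ (mem_filter.mp hq).2 hpm).resolve_left hqp).symm

theorem le_apply_of_eq_zero_of_notMem [HasLines P L] [LE M] {k : M}
    (hblock : ∀ l : L, k ≤ ∑ q : P with q ∈ l, w q) (hw : ∀ q : P, q ∉ ℓ → w q = 0) {p : P}
    (hp : p ∈ ℓ) : k ≤ w p := by
  obtain ⟨q, hq⟩ := Nondegenerate.exists_point (P := P) ℓ
  have hpq : p ≠ q := fun h => hq (h ▸ hp)
  obtain ⟨hpm, hqm⟩ := HasLines.mkLine_ax (L := L) hpq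
  calc k ≤ ∑ q : P with q ∈ HasLines.mkLine hpq, w q := hblock _
    _ = w p := sum_filter_mem_eq_of_eq_zero_of_notMem hw (fun h => hq (h ▸ hqm)) hp hpm

end Weights

end Configuration

/-- In a finite projective plane of order `n`, a 2-fold blocking multiset of total weight
`2n + 2` whose support has at most `n + 1` points is a line counted twice. -/
theorem two_fold_blocking_multiset_is_double_line
    (P L : Type*) [Membership P L] [ProjectivePlane P L] [Fintype P] [Fintype L]
    [∀ l : L, DecidablePred (· ∈ l)]
    (w : P → ℕ)
    (htot : ∑ p : P, w p = 2 * ProjectivePlane.order P L + 2)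
    (hsupp : {p : P | 0 < w p}.ncard ≤ ProjectivePlane.order P L + 1)
    (hblock : ∀ l : L, 2 ≤ ∑ p ∈ Finset.univ.filter (· ∈ l), w p) :
    ∃ l : L, (∀ p : P, p ∈ l → w p = 2) ∧ ∀ p : P, p ∉ l → w p = 0 := by
  obtain ⟨ℓ, hℓ⟩ : ∃ ℓ : L, ({p | p ∈ ℓ} : Finset P) = ({p | 0 < w p} : Finset P) := by
    refine ProjectivePlane.exists_filter_mem_eq_of_blocking (L := L) (fun l => ?_) ?_
    · obtain ⟨q, hq, hwq⟩ := exists_ne_zero_of_sum_ne_zero (two_pos.trans_le (hblock l)).ne'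
      exact ⟨q, by simpa [Nat.pos_iff_ne_zero] using hwq, (mem_filter.mp hq).2⟩
    · rwa [← Set.ncard_coe_finset, coe_filter_univ]
  have hoff : ∀ p : P, p ∉ ℓ → w p = 0 := fun p hp => by
    simpa [hp] using (Finset.ext_iff.mp hℓ p).not
  have hsum : ∑ p : P with p ∈ ℓ, w p = ∑ p : P with p ∈ ℓ, 2 := by
    rw [sum_filter_of_ne fun p _ hwp => not_imp_comm.mp (hoff p) hwp, htot, sum_const,
      ProjectivePlane.card_filter_points_on, smul_eq_mul]
    ring
  refine ⟨ℓ, fun p hp => ?_, hoff⟩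
  refine ((sum_eq_sum_iff_of_le fun q hq => ?_).mp hsum.symm p (by simpa using hp)).symm
  exact le_apply_of_eq_zero_of_notMem hblock hoff (mem_filter.mp hq).2
end
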